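/- arXiv:1912.01057 — 8 statements merged into one kernel-verified Lean document; each statement's English description precedes it below -/
import Mathlib

section
/- For every complex number a, every positive integer N, and every complex number z, |(cos(z/N) + i·a·sin(z/N))^N| ≤ exp(|a|·|z| + |Im(z)|). -/
/-!
Each factor is bounded pointwise: `‖cos w‖ ≤ e^{|Im w|}`, and by the mean value inequality on the
strip `|Im u| ≤ |Im w|` also `‖sin w‖ ≤ ‖w‖ e^{|Im w|}`. Hence the base is at most
`(1 + ‖a‖‖w‖) e^{|Im w|} ≤ e^{‖a‖‖w‖ + |Im w|}`, and the `N`-th power with `w = z / N` gives the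
claim.
-/

open Complex

theorem Complex.norm_cos_le_exp_abs_im (w : ℂ) : ‖cos w‖ ≤ Real.exp |w.im| := by
  have h₁ : ‖exp (w * I)‖ ≤ Real.exp |w.im| := by
    rw [norm_exp]; simpa using neg_le_abs w.im
  have h₂ : ‖exp (-w * I)‖ ≤ Real.exp |w.im| := by
    rw [norm_exp]; simpa using le_abs_self w.im
  calc ‖cos w‖ = ‖exp (w * I) + exp (-w * I)‖ / 2 := by rw [cos, norm_div, Complex.norm_ofNat]
    _ ≤ (‖exp (w * I)‖ + ‖exp (-w * I)‖) / 2 := by gcongr; exact norm_add_le _ _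
    _ ≤ Real.exp |w.im| := by linarith

theorem Complex.convex_abs_im_le (c : ℝ) : Convex ℝ {u : ℂ | |u.im| ≤ c} := by
  simp only [abs_le]
  exact (convex_Icc (-c) c).linear_preimage Complex.imLm

theorem Complex.norm_sin_le_norm_mul_exp_abs_im (w : ℂ) : ‖sin w‖ ≤ ‖w‖ * Real.exp |w.im| := by
  have h := (convex_abs_im_le |w.im|).norm_image_sub_le_of_norm_hasDerivWithin_le
    (fun u _ => (hasDerivAt_sin u).hasDerivWithinAt)
    (fun u hu => (norm_cos_le_exp_abs_im u).trans (Real.exp_le_exp.2 (by simpa using hu)))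
    (x := 0) (by simp) (y := w) (by simp)
  simpa [mul_comm] using h

theorem Complex.norm_cos_add_I_mul_mul_sin_le (a w : ℂ) :
    ‖cos w + I * a * sin w‖ ≤ Real.exp (‖a‖ * ‖w‖ + |w.im|) :=
  calc ‖cos w + I * a * sin w‖
      ≤ ‖cos w‖ + ‖a‖ * ‖sin w‖ := by simpa using norm_add_le (cos w) (I * a * sin w)
    _ ≤ Real.exp |w.im| + ‖a‖ * (‖w‖ * Real.exp |w.im|) := by
        gcongr
        exacts [norm_cos_le_exp_abs_im w, norm_sin_le_norm_mul_exp_abs_im w]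
    _ = (1 + ‖a‖ * ‖w‖) * Real.exp |w.im| := by ring
    _ ≤ Real.exp (‖a‖ * ‖w‖) * Real.exp |w.im| := by
        gcongr; linarith [Real.add_one_le_exp (‖a‖ * ‖w‖)]
    _ = Real.exp (‖a‖ * ‖w‖ + |w.im|) := (Real.exp_add _ _).symm

theorem RCLike.natCast_mul_norm_div_natCast_le {𝕜 : Type*} [RCLike 𝕜] (n : ℕ) (x : 𝕜) :
    n * ‖x / n‖ ≤ ‖x‖ := by
  rcases Nat.eq_zero_or_pos n with rfl | hn
  · simp
  · rw [norm_div, RCLike.norm_natCast, mul_div_cancel₀ _ (by positivity)]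

theorem FN_bound_general (a : ℂ) (N : ℕ) (z : ℂ) :
    ‖(Complex.cos (z / N) + Complex.I * a * Complex.sin (z / N)) ^ N‖ ≤
      Real.exp (‖a‖ * ‖z‖ + |z.im|) := by
  have h_norm : N * ‖z / N‖ ≤ ‖z‖ := RCLike.natCast_mul_norm_div_natCast_le N z
  have h_im : N * |(z / N).im| ≤ |z.im| := by
    simpa only [div_natCast_im, Real.norm_eq_abs] using
      RCLike.natCast_mul_norm_div_natCast_le N z.im
  calc ‖(cos (z / N) + I * a * sin (z / N)) ^ N‖
      = ‖cos (z / N) + I * a * sin (z / N)‖ ^ N := norm_pow _ _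
    _ ≤ Real.exp (‖a‖ * ‖z / N‖ + |(z / N).im|) ^ N :=
        pow_le_pow_left₀ (norm_nonneg _) (norm_cos_add_I_mul_mul_sin_le a _) N
    _ = Real.exp (‖a‖ * (N * ‖z / N‖) + N * |(z / N).im|) := by
        rw [← Real.exp_nat_mul]; ring_nf
    _ ≤ Real.exp (‖a‖ * ‖z‖ + |z.im|) := by gcongr

theorem FN_bound (a : ℂ) (N : ℕ) (hN : 1 ≤ N) (z : ℂ) :
    ‖(Complex.cos (z / N) + Complex.I * a * Complex.sin (z / N)) ^ N‖ ≤
      Real.exp (‖a‖ * ‖z‖ + |z.im|) :=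
  FN_bound_general a N z
end

section
/- For every complex number a with α := max(1, |a|), every positive integer N, and every complex number z, |(cos(z/N) + i·a·sin(z/N))^N − exp(i·a·z)| ≤ (2/3)·(|a²−1|/N)·|z|²·exp((α+1)·|z|). -/
/-!
Put `w = z / N`, `F = cos w + i a sin w` and `G = exp (i a w)`; the claim is about
`F ^ N - G ^ N`. The path `H t = exp (i a w (1 - t)) (cos (t w) + i a sin (t w))` runs from `G`
to `F`, and its derivative `(a² - 1) w exp (i a w (1 - t)) sin (t w)` is `O(t)` because of the
sine; integrating gives `‖F - G‖ ≤ ½ ‖a² - 1‖ ‖w‖² exp (α ‖w‖)`. Both `F` and `G` have norm at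
most `exp ((α + 1) ‖w‖)`, and telescoping `F ^ N - G ^ N` costs a factor
`N exp ((α + 1) ‖w‖) ^ (N - 1)`.
-/

open Complex

namespace Complex

lemma norm_cos_le_exp_norm (u : ℂ) : ‖cos u‖ ≤ Real.exp ‖u‖ := by
  have hexp (v : ℂ) (hv : ‖v‖ = ‖u‖) : ‖exp v‖ ≤ Real.exp ‖u‖ :=
    hv ▸ norm_exp_le_exp_norm v
  calc ‖cos u‖ = ‖exp (u * I) + exp (-u * I)‖ / 2 := by simp [cos]
    _ ≤ (Real.exp ‖u‖ + Real.exp ‖u‖) / 2 := by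
        gcongr
        exact (norm_add_le _ _).trans (add_le_add (hexp _ (by simp)) (hexp _ (by simp)))
    _ = Real.exp ‖u‖ := by ring

lemma norm_sin_le_norm_mul_exp_norm (u : ℂ) : ‖sin u‖ ≤ ‖u‖ * Real.exp ‖u‖ := by
  have h := (convex_closedBall (0 : ℂ) ‖u‖).norm_image_sub_le_of_norm_hasDerivWithin_le
    (fun v _ => (hasDerivAt_sin v).hasDerivWithinAt)
    (fun v hv => (norm_cos_le_exp_norm v).trans
      (Real.exp_le_exp.2 (mem_closedBall_zero_iff.1 hv)))
    (Metric.mem_closedBall_self (norm_nonneg u)) (mem_closedBall_zero_iff.2 le_rfl)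
  simpa [mul_comm] using h

end Complex

lemma norm_pow_sub_pow_le {R : Type*} [NormedCommRing R] [NormOneClass R] {x y : R} {M : ℝ}
    (hx : ‖x‖ ≤ M) (hy : ‖y‖ ≤ M) (n : ℕ) :
    ‖x ^ n - y ^ n‖ ≤ n * M ^ (n - 1) * ‖x - y‖ := by
  rw [← geom_sum₂_mul]
  refine (norm_mul_le _ _).trans (mul_le_mul_of_nonneg_right ?_ (norm_nonneg _))
  calc ‖∑ i ∈ Finset.range n, x ^ i * y ^ (n - 1 - i)‖
      ≤ ∑ i ∈ Finset.range n, ‖x‖ ^ i * ‖y‖ ^ (n - 1 - i) :=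
        (norm_sum_le _ _).trans <| Finset.sum_le_sum fun i _ =>
          (norm_mul_le _ _).trans (mul_le_mul (norm_pow_le _ _) (norm_pow_le _ _)
            (norm_nonneg _) (by positivity))
    _ ≤ ∑ i ∈ Finset.range n, M ^ (n - 1) := Finset.sum_le_sum fun i hi => by
        have hM : 0 ≤ M := (norm_nonneg x).trans hx
        rw [← Nat.add_sub_cancel' (Nat.le_sub_one_of_lt (Finset.mem_range.1 hi)), pow_add,
          Nat.add_sub_cancel_left]
        gcongr
    _ = n * M ^ (n - 1) := by simp

section OneStep

variable (a w : ℂ)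

lemma hasDerivAt_exp_mul_cos_add_I_mul_sin (s : ℂ) :
    HasDerivAt (fun s => exp (I * a * w * (1 - s)) * (cos (s * w) + I * a * sin (s * w)))
      ((a ^ 2 - 1) * w * exp (I * a * w * (1 - s)) * sin (s * w)) s := by
  have hlin : HasDerivAt (fun s : ℂ => I * a * w * (1 - s)) (-(I * a * w)) s := by
    simpa using ((hasDerivAt_id s).const_sub 1).const_mul (I * a * w)
  have hmul : HasDerivAt (fun s : ℂ => s * w) w s := by
    simpa using (hasDerivAt_id s).mul_const w
  refine (hlin.cexp.mul (hmul.ccos.add (hmul.csin.const_mul (I * a)))).congr_deriv ?_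
  simp only [Pi.add_apply]
  linear_combination (-1 : ℂ) * (a ^ 2 * w * exp (I * a * w * (1 - s)) * sin (s * w)) * I_sq

lemma norm_deriv_exp_mul_cos_add_I_mul_sin_le {t : ℝ} (ht₀ : 0 ≤ t) (ht₁ : t ≤ 1) :
    ‖(a ^ 2 - 1) * w * exp (I * a * w * (1 - t)) * sin (t * w)‖ ≤
      ‖a ^ 2 - 1‖ * ‖w‖ ^ 2 * Real.exp (max 1 ‖a‖ * ‖w‖) * t := by
  have hexp : ‖exp (I * a * w * (1 - t))‖ ≤ Real.exp (‖a‖ * ‖w‖ * (1 - t)) := by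
    refine (norm_exp_le_exp_norm _).trans_eq ?_
    rw [show (1 : ℂ) - t = ((1 - t : ℝ) : ℂ) by push_cast; ring]
    simp only [norm_mul, norm_I, one_mul, norm_real,
      Real.norm_of_nonneg (sub_nonneg.2 ht₁)]
  have hsin : ‖sin (t * w)‖ ≤ t * ‖w‖ * Real.exp (t * ‖w‖) := by
    simpa [abs_of_nonneg ht₀] using norm_sin_le_norm_mul_exp_norm (t * w)
  have hexponent : ‖a‖ * ‖w‖ * (1 - t) + t * ‖w‖ ≤ max 1 ‖a‖ * ‖w‖ := by
    have hw := norm_nonneg w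
    nlinarith [mul_le_mul_of_nonneg_right (le_max_right 1 ‖a‖) (mul_nonneg hw (sub_nonneg.2 ht₁)),
      mul_le_mul_of_nonneg_right (le_max_left 1 ‖a‖) (mul_nonneg hw ht₀)]
  calc ‖(a ^ 2 - 1) * w * exp (I * a * w * (1 - t)) * sin (t * w)‖
      = ‖a ^ 2 - 1‖ * ‖w‖ * ‖exp (I * a * w * (1 - t))‖ * ‖sin (t * w)‖ := by
        simp only [norm_mul]
    _ ≤ ‖a ^ 2 - 1‖ * ‖w‖ * Real.exp (‖a‖ * ‖w‖ * (1 - t)) *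
          (t * ‖w‖ * Real.exp (t * ‖w‖)) := by
        gcongr
    _ = ‖a ^ 2 - 1‖ * ‖w‖ ^ 2 * Real.exp (‖a‖ * ‖w‖ * (1 - t) + t * ‖w‖) * t := by
        rw [Real.exp_add]; ring
    _ ≤ ‖a ^ 2 - 1‖ * ‖w‖ ^ 2 * Real.exp (max 1 ‖a‖ * ‖w‖) * t := by
        gcongr

theorem norm_cos_add_I_mul_sin_sub_exp_le :
    ‖cos w + I * a * sin w - exp (I * a * w)‖ ≤
      ‖a ^ 2 - 1‖ * ‖w‖ ^ 2 * Real.exp (max 1 ‖a‖ * ‖w‖) / 2 := by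
  set C := ‖a ^ 2 - 1‖ * ‖w‖ ^ 2 * Real.exp (max 1 ‖a‖ * ‖w‖)
  let H : ℝ → ℂ := fun t =>
    exp (I * a * w * (1 - t)) * (cos (t * w) + I * a * sin (t * w)) - exp (I * a * w)
  have hH (t : ℝ) : HasDerivAt H
      ((a ^ 2 - 1) * w * exp (I * a * w * (1 - t)) * sin (t * w)) t :=
    ((hasDerivAt_exp_mul_cos_add_I_mul_sin a w t).comp_ofReal).sub_const _
  have hB (t : ℝ) : HasDerivAt (fun t => C / 2 * t ^ 2) (C * t) t := by
    refine ((hasDerivAt_pow 2 t).const_mul (C / 2)).congr_deriv ?_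
    norm_num
    ring
  have h := image_norm_le_of_norm_deriv_right_le_deriv_boundary
    (fun t _ => (hH t).continuousAt.continuousWithinAt)
    (fun t _ => (hH t).hasDerivWithinAt)
    (by simp [H]) hB
    (fun t ht => norm_deriv_exp_mul_cos_add_I_mul_sin_le a w ht.1 ht.2.le)
    (Set.right_mem_Icc.2 zero_le_one)
  simpa [H, C, mul_assoc] using h

lemma norm_cos_add_I_mul_sin_le :
    ‖cos w + I * a * sin w‖ ≤ Real.exp ((max 1 ‖a‖ + 1) * ‖w‖) := by
  have hα : ‖a‖ ≤ max 1 ‖a‖ := le_max_right _ _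
  calc ‖cos w + I * a * sin w‖
      ≤ Real.exp ‖w‖ + max 1 ‖a‖ * (‖w‖ * Real.exp ‖w‖) := by
        refine (norm_add_le _ _).trans (add_le_add (norm_cos_le_exp_norm w) ?_)
        rw [norm_mul, norm_mul, norm_I, one_mul]
        exact mul_le_mul hα (norm_sin_le_norm_mul_exp_norm w) (norm_nonneg _)
          ((norm_nonneg a).trans hα)
    _ = Real.exp ‖w‖ * (max 1 ‖a‖ * ‖w‖ + 1) := by ring
    _ ≤ Real.exp ‖w‖ * Real.exp (max 1 ‖a‖ * ‖w‖) := by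
        gcongr; exact Real.add_one_le_exp _
    _ = Real.exp ((max 1 ‖a‖ + 1) * ‖w‖) := by rw [← Real.exp_add]; congr 1; ring

lemma norm_exp_I_mul_le :
    ‖exp (I * a * w)‖ ≤ Real.exp ((max 1 ‖a‖ + 1) * ‖w‖) := by
  refine (norm_exp_le_exp_norm _).trans (Real.exp_le_exp.2 ?_)
  rw [norm_mul, norm_mul, norm_I, one_mul]
  nlinarith [le_max_right 1 ‖a‖, norm_nonneg w]

end OneStep

theorem FN_sub_exp_bound (a : ℂ) (N : ℕ) (hN : 1 ≤ N) (z : ℂ) :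
    ‖(Complex.cos (z / N) + Complex.I * a * Complex.sin (z / N)) ^ N -
        Complex.exp (Complex.I * a * z)‖ ≤
      2 / 3 * (‖a ^ 2 - 1‖ / N) * ‖z‖ ^ 2 *
        Real.exp ((max 1 ‖a‖ + 1) * ‖z‖) := by
  set α := max 1 ‖a‖
  set w := z / N
  set M := Real.exp ((α + 1) * ‖w‖)
  have hN₀ : (N : ℝ) ≠ 0 := by positivity
  have hz : z = N * w := (mul_div_cancel₀ z (by exact_mod_cast hN₀)).symm
  have hnorm_z : ‖z‖ = N * ‖w‖ := by rw [hz, norm_mul, norm_natCast]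
  have hexp_z : exp (I * a * z) = exp (I * a * w) ^ N := by
    rw [← exp_nat_mul, hz]; ring_nf
  have hexponent : M ^ (N - 1) * Real.exp (α * ‖w‖) ≤ Real.exp ((α + 1) * ‖z‖) := by
    rw [← Real.exp_nat_mul, ← Real.exp_add, hnorm_z, Nat.cast_sub hN, Nat.cast_one]
    gcongr
    nlinarith [norm_nonneg w]
  rw [hexp_z]
  calc _ ≤ N * M ^ (N - 1) * ‖cos w + I * a * sin w - exp (I * a * w)‖ :=
        norm_pow_sub_pow_le (norm_cos_add_I_mul_sin_le a w) (norm_exp_I_mul_le a w) N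
    _ ≤ N * M ^ (N - 1) * (‖a ^ 2 - 1‖ * ‖w‖ ^ 2 * Real.exp (α * ‖w‖) / 2) := by
        gcongr; exact norm_cos_add_I_mul_sin_sub_exp_le a w
    _ = ‖a ^ 2 - 1‖ / N * (N * ‖w‖) ^ 2 / 2 * (M ^ (N - 1) * Real.exp (α * ‖w‖)) := by
        field_simp
    _ ≤ ‖a ^ 2 - 1‖ / N * ‖z‖ ^ 2 / 2 * Real.exp ((α + 1) * ‖z‖) := by
        rw [← hnorm_z]; gcongr
    _ ≤ 2 / 3 * (‖a ^ 2 - 1‖ / N) * ‖z‖ ^ 2 * Real.exp ((α + 1) * ‖z‖) := by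
        have : 0 ≤ ‖a ^ 2 - 1‖ / N * ‖z‖ ^ 2 * Real.exp ((α + 1) * ‖z‖) := by
          positivity
        linarith
end

section
/- For all complex numbers a, z and all positive integers N, |cos(z/N) − cos(a·z/N)| ≤ (|a²−1|/(2N²))·|z|²·exp((max(1,|a|)+1)·|z|/N). -/
/-! Writing `cos w - cos (a w) = -2 sin ((1 + a) w / 2) sin ((1 - a) w / 2)` and bounding each sine
by `‖sin u‖ ≤ ‖u‖ exp ‖u‖` gives the factor `‖1 + a‖ ‖1 - a‖ / 2 = ‖a² - 1‖ / 2` in front of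
`‖w‖²`, while the exponents add up to at most `(‖a‖ + 1) ‖w‖`. Then take `w = z / N`. -/

open Complex

namespace Complex

lemma norm_sin_le_mul_exp_norm (w : ℂ) : ‖sin w‖ ≤ ‖w‖ * Real.exp ‖w‖ := by
  have hmvt := (convex_closedBall (0 : ℂ) ‖w‖).norm_image_sub_le_of_norm_hasDerivWithin_le
    (fun x _ => (hasDerivAt_sin x).hasDerivWithinAt)
    (fun x hx => (norm_cos_le_exp_norm x).trans (Real.exp_le_exp.2 (by simpa using hx)))
    (Metric.mem_closedBall_self (norm_nonneg w)) (y := w) (by simp)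
  simpa [mul_comm] using hmvt

lemma cos_sub_cos_mul (a w : ℂ) :
    cos w - cos (a * w) = -2 * sin ((1 + a) * w / 2) * sin ((1 - a) * w / 2) := by
  rw [cos_sub_cos]
  ring_nf

lemma norm_cos_sub_cos_mul_le (a w : ℂ) :
    ‖cos w - cos (a * w)‖ ≤ ‖a ^ 2 - 1‖ / 2 * ‖w‖ ^ 2 * Real.exp ((‖a‖ + 1) * ‖w‖) := by
  set p := ‖1 + a‖ * ‖w‖ / 2
  set q := ‖1 - a‖ * ‖w‖ / 2
  have hp : ‖(1 + a) * w / 2‖ = p := by simp [p]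
  have hq : ‖(1 - a) * w / 2‖ = q := by simp [q]
  have hpq : p + q ≤ (‖a‖ + 1) * ‖w‖ := by
    have h1 : ‖1 + a‖ ≤ 1 + ‖a‖ := (norm_add_le _ _).trans (by simp)
    have h2 : ‖1 - a‖ ≤ 1 + ‖a‖ := (norm_sub_le _ _).trans (by simp)
    have hw := norm_nonneg w
    simp only [p, q]
    nlinarith
  have hfactor : ‖a ^ 2 - 1‖ = ‖1 + a‖ * ‖1 - a‖ := by
    rw [show a ^ 2 - 1 = -((1 + a) * (1 - a)) by ring, norm_neg, norm_mul]
  rw [cos_sub_cos_mul, norm_mul, norm_mul]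
  calc ‖(-2 : ℂ)‖ * ‖sin ((1 + a) * w / 2)‖ * ‖sin ((1 - a) * w / 2)‖
      ≤ 2 * (p * Real.exp p) * (q * Real.exp q) := by
        have hs : ‖sin ((1 + a) * w / 2)‖ ≤ p * Real.exp p := hp ▸ norm_sin_le_mul_exp_norm _
        have ht : ‖sin ((1 - a) * w / 2)‖ ≤ q * Real.exp q := hq ▸ norm_sin_le_mul_exp_norm _
        rw [norm_neg, Complex.norm_ofNat]
        gcongr
    _ = 2 * p * q * Real.exp (p + q) := by rw [Real.exp_add]; ring
    _ ≤ 2 * p * q * Real.exp ((‖a‖ + 1) * ‖w‖) := by gcongr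
    _ = ‖a ^ 2 - 1‖ / 2 * ‖w‖ ^ 2 * Real.exp ((‖a‖ + 1) * ‖w‖) := by
        rw [hfactor]; ring

end Complex

theorem cos_diff_bound_general (a z : ℂ) (N : ℕ) :
    ‖Complex.cos (z / N) - Complex.cos (a * z / N)‖ ≤
      ‖a ^ 2 - 1‖ / (2 * N ^ 2) * ‖z‖ ^ 2 *
        Real.exp ((max 1 ‖a‖ + 1) * ‖z‖ / N) := by
  have hnorm : ‖z / N‖ = ‖z‖ / N := by simp
  calc ‖cos (z / N) - cos (a * z / N)‖
      ≤ ‖a ^ 2 - 1‖ / 2 * ‖z / N‖ ^ 2 * Real.exp ((‖a‖ + 1) * ‖z / N‖) := by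
        rw [mul_div_assoc]
        exact norm_cos_sub_cos_mul_le a (z / N)
    _ = ‖a ^ 2 - 1‖ / (2 * N ^ 2) * ‖z‖ ^ 2 * Real.exp ((‖a‖ + 1) * ‖z‖ / N) := by
        rw [hnorm]; ring_nf
    _ ≤ ‖a ^ 2 - 1‖ / (2 * N ^ 2) * ‖z‖ ^ 2 * Real.exp ((max 1 ‖a‖ + 1) * ‖z‖ / N) := by
        gcongr
        exact le_max_right _ _

theorem cos_diff_bound (a z : ℂ) (N : ℕ) (hN : 1 ≤ N) :
    ‖Complex.cos (z / N) - Complex.cos (a * z / N)‖ ≤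
      ‖a ^ 2 - 1‖ / (2 * N ^ 2) * ‖z‖ ^ 2 *
        Real.exp ((max 1 ‖a‖ + 1) * ‖z‖ / N) :=
  cos_diff_bound_general a z N
end

section
/- For all complex numbers a, z and all positive integers N, |a·sin(z/N) − sin(a·z/N)| ≤ (|a²−1|/(6N²))·|z|²·exp(max(1,|a|)·|z|/N). -/
/-!
Subtracting the sine series of `a w` from `a` times that of `w`, the linear terms cancel and the
term of degree `2k + 3` has coefficient `±(a ^ (2k+3) - a) / (2k+3)!`. Since
`a ^ (2k+3) - a = (a² - 1) (a + a³ + ⋯ + a ^ (2k+1))`, its norm is at most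
`‖a² - 1‖ (k + 1) M ^ (2k+1)` with `M = max 1 ‖a‖`, and `6 (k + 1) (2k+1)! ≤ (2k+3)!`. Summing,
`‖a sin w - sin (a w)‖ ≤ ‖a² - 1‖ / 6 · ‖w‖² · sinh (M ‖w‖)`; then take `w = z / N` and
bound `sinh` by `exp`.
-/

open Nat in
theorem six_mul_succ_mul_factorial_le (k : ℕ) : 6 * (k + 1) * (2 * k + 1)! ≤ (2 * k + 3)! := by
  rw [show (2 * k + 3)! = (2 * k + 3) * (2 * k + 2) * (2 * k + 1)! by
    rw [mul_assoc, ← factorial_succ, ← factorial_succ]]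
  exact Nat.mul_le_mul_right _ (by nlinarith)

theorem norm_pow_sub_self_le {R : Type*} [SeminormedRing R] (a : R) (k : ℕ) :
    ‖a ^ (2 * k + 3) - a‖ ≤ ‖a ^ 2 - 1‖ * ((k + 1) * max 1 ‖a‖ ^ (2 * k + 1)) := by
  have hfactor :
      a ^ (2 * k + 3) - a = (a ^ 2 - 1) * ∑ i ∈ Finset.range (k + 1), a ^ (2 * i + 1) := by
    simp only [pow_succ _ (2 * _), pow_mul]
    rw [← Finset.sum_mul, ← mul_assoc, mul_geom_sum, sub_one_mul, ← pow_mul, ← pow_succ]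
    ring_nf
  have hsum : ‖∑ i ∈ Finset.range (k + 1), a ^ (2 * i + 1)‖ ≤ (k + 1) * max 1 ‖a‖ ^ (2 * k + 1) :=
    calc ‖∑ i ∈ Finset.range (k + 1), a ^ (2 * i + 1)‖
        ≤ ∑ i ∈ Finset.range (k + 1), ‖a ^ (2 * i + 1)‖ := norm_sum_le _ _
      _ ≤ ∑ _i ∈ Finset.range (k + 1), max 1 ‖a‖ ^ (2 * k + 1) := by
          gcongr with i hi
          calc ‖a ^ (2 * i + 1)‖ ≤ ‖a‖ ^ (2 * i + 1) := norm_pow_le' a (by omega)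
            _ ≤ max 1 ‖a‖ ^ (2 * i + 1) := by gcongr; exact le_max_right _ _
            _ ≤ max 1 ‖a‖ ^ (2 * k + 1) := by
              gcongr
              · exact le_max_left _ _
              · have := Finset.mem_range.mp hi; omega
      _ = (k + 1) * max 1 ‖a‖ ^ (2 * k + 1) := by simp
  rw [hfactor]
  exact (norm_mul_le _ _).trans (by gcongr)

open scoped Nat in
theorem Complex.hasSum_mul_sin_sub_sin_mul (a w : ℂ) :
    HasSum (fun k : ℕ => (-1) ^ k * (a ^ (2 * k + 3) - a) * w ^ (2 * k + 3) / (2 * k + 3)!)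
      (a * sin w - sin (a * w)) := by
  have h := (hasSum_nat_add_iff' 1).mpr (((hasSum_sin w).mul_left a).sub (hasSum_sin (a * w)))
  simp only [Finset.sum_range_one, pow_zero, one_mul, mul_zero, zero_add, pow_one,
    Nat.factorial_one, Nat.cast_one, div_one, sub_self, sub_zero] at h
  convert h using 2 with k
  · rfl
  · rw [show 2 * (k + 1) + 1 = 2 * k + 3 by ring]
    ring

open scoped Nat in
theorem Complex.norm_mul_sin_sub_sin_mul_le (a w : ℂ) :
    ‖a * sin w - sin (a * w)‖ ≤ ‖a ^ 2 - 1‖ / 6 * ‖w‖ ^ 2 * Real.sinh (max 1 ‖a‖ * ‖w‖) := by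
  refine (hasSum_mul_sin_sub_sin_mul a w).norm_le_of_bounded
    ((Real.hasSum_sinh _).mul_left (‖a ^ 2 - 1‖ / 6 * ‖w‖ ^ 2)) fun k => ?_
  have hfact : 6 * (k + 1) / ((2 * k + 3)! : ℝ) ≤ 1 / (2 * k + 1)! := by
    rw [div_le_div_iff₀ (by positivity) (by positivity)]
    exact_mod_cast by simpa using six_mul_succ_mul_factorial_le k
  calc ‖(-1) ^ k * (a ^ (2 * k + 3) - a) * w ^ (2 * k + 3) / (2 * k + 3)!‖
      = ‖a ^ (2 * k + 3) - a‖ * ‖w‖ ^ (2 * k + 3) / (2 * k + 3)! := by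
        simp
    _ ≤ ‖a ^ 2 - 1‖ * ((k + 1) * max 1 ‖a‖ ^ (2 * k + 1)) * ‖w‖ ^ (2 * k + 3) / (2 * k + 3)! := by
        gcongr; exact norm_pow_sub_self_le a k
    _ = ‖a ^ 2 - 1‖ / 6 * ‖w‖ ^ 2 * ((max 1 ‖a‖ * ‖w‖) ^ (2 * k + 1)) *
          (6 * (k + 1) / ((2 * k + 3)! : ℝ)) := by ring
    _ ≤ ‖a ^ 2 - 1‖ / 6 * ‖w‖ ^ 2 * ((max 1 ‖a‖ * ‖w‖) ^ (2 * k + 1)) * (1 / (2 * k + 1)!) := by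
        gcongr
    _ = ‖a ^ 2 - 1‖ / 6 * ‖w‖ ^ 2 * ((max 1 ‖a‖ * ‖w‖) ^ (2 * k + 1) / (2 * k + 1)!) := by ring

theorem Real.sinh_le_exp (x : ℝ) : sinh x ≤ exp x := by
  linarith [exp_sub_sinh x, cosh_pos x]

open Complex in
theorem sin_diff_bound_general (a z : ℂ) (N : ℕ) :
    ‖a * Complex.sin (z / N) - Complex.sin (a * z / N)‖ ≤
      ‖a ^ 2 - 1‖ / (6 * N ^ 2) * ‖z‖ ^ 2 *
        Real.exp (max 1 ‖a‖ * ‖z‖ / N) := by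
  have norm_div_N : ‖z / N‖ = ‖z‖ / N := by rw [norm_div, norm_natCast]
  calc ‖a * sin (z / N) - sin (a * z / N)‖ = ‖a * sin (z / N) - sin (a * (z / N))‖ := by
        rw [mul_div_assoc]
    _ ≤ ‖a ^ 2 - 1‖ / 6 * ‖z / N‖ ^ 2 * Real.sinh (max 1 ‖a‖ * ‖z / N‖) :=
        norm_mul_sin_sub_sin_mul_le a (z / N)
    _ ≤ ‖a ^ 2 - 1‖ / 6 * ‖z / N‖ ^ 2 * Real.exp (max 1 ‖a‖ * ‖z / N‖) := by
        gcongr; exact Real.sinh_le_exp _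
    _ = ‖a ^ 2 - 1‖ / (6 * N ^ 2) * ‖z‖ ^ 2 * Real.exp (max 1 ‖a‖ * ‖z‖ / N) := by
        rw [norm_div_N, mul_div_assoc]
        ring

theorem sin_diff_bound (a z : ℂ) (N : ℕ) (hN : 1 ≤ N) :
    ‖a * Complex.sin (z / N) - Complex.sin (a * z / N)‖ ≤
      ‖a ^ 2 - 1‖ / (6 * N ^ 2) * ‖z‖ ^ 2 *
        Real.exp (max 1 ‖a‖ * ‖z‖ / N) :=
  sin_diff_bound_general a z N
end

section
/- Let b_j ∈ ℂ with |b_j| ≤ C·b^j/Γ(j/p+1) for some C, b > 0 and p ≥ 1, and let f(W) = Σ_{ℓ≥0} a_ℓ W^ℓ be entire with |a_ℓ| ≤ γ·β^ℓ/ℓ! for some γ, β > 0. Then the series g(W) = Σ_{ℓ≥0} (Σ_{j≥0} ((j+ℓ)!/ℓ!)·b_j·a_{ℓ+j}) W^ℓ converges for all W ∈ ℂ, defines an entire function equal to Σ_{j≥0} b_j f^{(j)}(W), and satisfies |g(W)| ≤ γ·C·E_{1/p,1}(bβ)·e^{β|W|} for all W, where E_{1/p,1}(ζ) = Σ_{k≥0}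 ζ^k/Γ(k/p+1). -/
/-!
Differentiating a power series termwise preserves exponential type: if `|a ℓ| ≤ γ β^ℓ / ℓ!`, the
`j`-th derivative has Taylor coefficients `(j + ℓ)! / ℓ! · a (ℓ + j)`, bounded by
`γ β^j · β^ℓ / ℓ!`. Hence the double series `∑_{j,ℓ} b_j (j + ℓ)! / ℓ! a_{ℓ+j} W^ℓ` is dominated
by `(∑_j |b_j| β^j) · γ ∑_ℓ (β|W|)^ℓ / ℓ! ≤ C E_{1/p,1}(bβ) · γ e^{β|W|}`, so it converges
absolutely and can be summed in either order. The Mittag-Leffler series converges because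
`Γ(k/p + 1) ≥ ⌊k/N⌋!` for an integer `N ≥ p`, and each value of `⌊k/N⌋` occurs only `N` times.
-/

open Filter
open scoped Nat

theorem summable_pow_div_factorial_div (x : ℝ) (N : ℕ) [NeZero N] :
    Summable fun k : ℕ => x ^ k / (k / N)! := by
  rw [← (Nat.divModEquiv N).symm.summable_iff]
  have hterm : ∀ qr : ℕ × Fin N, ((fun k : ℕ => x ^ k / (k / N)!) ∘ (Nat.divModEquiv N).symm) qr
      = (x ^ N) ^ qr.1 / qr.1 ! * x ^ (qr.2 : ℕ) := by
    rintro ⟨q, r⟩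
    have hdiv : (q * N + r) / N = q := by
      rw [Nat.add_comm, Nat.add_mul_div_right _ _ (NeZero.pos N), Nat.div_eq_of_lt r.is_lt,
        zero_add]
    simp only [Function.comp_apply, Nat.divModEquiv_symm_apply, hdiv, pow_add, pow_mul']
    ring
  refine (summable_mul_of_summable_norm (f := fun q : ℕ => (x ^ N) ^ q / q !)
    (g := fun r : Fin N => x ^ (r : ℕ)) ?_ Summable.of_finite).congr fun qr => (hterm qr).symm
  simpa [abs_pow] using Real.summable_pow_div_factorial (|x| ^ N)

theorem factorial_div_le_Gamma {p : ℝ} {N k : ℕ} (hp : 0 < p) (hpN : p ≤ N) (hNk : N ≤ k) :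
    ((k / N)! : ℝ) ≤ Real.Gamma (k / p + 1) := by
  have hN : 0 < N := by exact_mod_cast hp.trans_le hpN
  have hq : (1 : ℝ) ≤ (k / N : ℕ) := by exact_mod_cast (Nat.one_le_div_iff hN).2 hNk
  have hqp : ((k / N : ℕ) : ℝ) ≤ k / p := calc
    ((k / N : ℕ) : ℝ) ≤ k / N := Nat.cast_div_le
    _ ≤ k / p := div_le_div_of_nonneg_left (by positivity) hp hpN
  rw [← Real.Gamma_nat_eq_factorial]
  exact Real.Gamma_strictMonoOn_Ici.monotoneOn (Set.mem_Ici.2 (by linarith))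
    (Set.mem_Ici.2 (by linarith)) (by linarith)

theorem summable_pow_div_Gamma {p : ℝ} (hp : 0 < p) (x : ℝ) :
    Summable fun k : ℕ => x ^ k / Real.Gamma (k / p + 1) := by
  have : NeZero ⌈p⌉₊ := ⟨(Nat.ceil_pos.2 hp).ne'⟩
  refine .of_norm_bounded_eventually_nat (summable_pow_div_factorial_div |x| ⌈p⌉₊) ?_
  filter_upwards [eventually_ge_atTop ⌈p⌉₊] with k hk
  have hΓ : 0 < Real.Gamma (k / p + 1) := Real.Gamma_pos_of_pos (by positivity)
  rw [norm_div, norm_pow, Real.norm_eq_abs, Real.norm_of_nonneg hΓ.le]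
  gcongr
  exact factorial_div_le_Gamma hp (Nat.le_ceil p) hk

def derivCoeff (c : ℕ → ℂ) (n : ℕ) : ℂ := (n + 1) * c (n + 1)

theorem derivCoeff_iterate_apply (c : ℕ → ℂ) (j n : ℕ) :
    derivCoeff^[j] c n = (j + n)! / n ! * c (n + j) := by
  induction j generalizing n with
  | zero => simp [Nat.factorial_ne_zero]
  | succ j ih =>
    rw [Function.iterate_succ_apply', derivCoeff, ih, show j + (n + 1) = j + 1 + n by omega,
      show n + 1 + j = n + (j + 1) by omega, Nat.factorial_succ n]
    push_cast
    field_simp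

section ExponentialType

variable {c : ℕ → ℂ} {K B : ℝ}

theorem norm_derivCoeff_le (hc : ∀ n, ‖c n‖ ≤ K * B ^ n / n !) (n : ℕ) :
    ‖derivCoeff c n‖ ≤ K * B * B ^ n / n ! := by
  calc ‖derivCoeff c n‖ = (n + 1) * ‖c (n + 1)‖ := by
        rw [derivCoeff, norm_mul]; norm_cast
    _ ≤ (n + 1) * (K * B ^ (n + 1) / (n + 1)!) := by gcongr; exact hc _
    _ = K * B * B ^ n / n ! := by
        rw [Nat.factorial_succ]; push_cast; field_simp; ring

theorem norm_derivCoeff_iterate_le (hc : ∀ n, ‖c n‖ ≤ K * B ^ n / n !) (j n : ℕ) :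
    ‖derivCoeff^[j] c n‖ ≤ K * B ^ j * B ^ n / n ! := by
  induction j generalizing n with
  | zero => simpa using hc n
  | succ j ih =>
    rw [Function.iterate_succ_apply', pow_succ, ← mul_assoc]
    exact norm_derivCoeff_le ih n

theorem norm_mul_pow_le (hc : ∀ n, ‖c n‖ ≤ K * B ^ n / n !) (z : ℂ) (n : ℕ) :
    ‖c n * z ^ n‖ ≤ K * ((B * ‖z‖) ^ n / n !) := calc
  ‖c n * z ^ n‖ = ‖c n‖ * ‖z‖ ^ n := by rw [norm_mul, norm_pow]
  _ ≤ K * B ^ n / n ! * ‖z‖ ^ n := by gcongr; exact hc n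
  _ = K * ((B * ‖z‖) ^ n / n !) := by ring

theorem summable_norm_mul_pow (hc : ∀ n, ‖c n‖ ≤ K * B ^ n / n !) (z : ℂ) :
    Summable fun n => ‖c n * z ^ n‖ :=
  .of_nonneg_of_le (fun _ => norm_nonneg _) (norm_mul_pow_le hc z)
    ((Real.summable_pow_div_factorial _).mul_left K)

theorem summable_mul_pow (hc : ∀ n, ‖c n‖ ≤ K * B ^ n / n !) (z : ℂ) :
    Summable fun n => c n * z ^ n :=
  .of_norm (summable_norm_mul_pow hc z)

theorem norm_tsum_mul_pow_le (hc : ∀ n, ‖c n‖ ≤ K * B ^ n / n !) (z : ℂ) :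
    ‖∑' n, c n * z ^ n‖ ≤ K * Real.exp (B * ‖z‖) := calc
  ‖∑' n, c n * z ^ n‖ ≤ ∑' n, ‖c n * z ^ n‖ := norm_tsum_le_tsum_norm (summable_norm_mul_pow hc z)
  _ ≤ ∑' n, K * ((B * ‖z‖) ^ n / n !) :=
    (summable_norm_mul_pow hc z).tsum_le_tsum (norm_mul_pow_le hc z)
      ((Real.summable_pow_div_factorial _).mul_left K)
  _ = K * Real.exp (B * ‖z‖) := by
    rw [tsum_mul_left, Real.exp_eq_exp_ℝ, NormedSpace.exp_eq_tsum_div]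

theorem hasDerivAt_tsum_mul_pow (hc : ∀ n, ‖c n‖ ≤ K * B ^ n / n !) (z : ℂ) :
    HasDerivAt (fun w => ∑' n, c n * w ^ n) (∑' n, derivCoeff c n * z ^ n) z := by
  set R := ‖z‖ + 1
  have hR : 1 ≤ R := le_add_of_nonneg_left (norm_nonneg z)
  have hz : z ∈ Metric.ball (0 : ℂ) R := mem_ball_zero_iff.2 (lt_add_one _)
  have hbound : ∀ n, ∀ y ∈ Metric.ball (0 : ℂ) R,
      ‖c n * (n * y ^ (n - 1))‖ ≤ ‖c n * ((2 * R : ℝ) : ℂ) ^ n‖ := by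
    intro n y hy
    have hy : ‖y‖ ≤ R := (mem_ball_zero_iff.1 hy).le
    simp only [norm_mul, norm_pow, Complex.norm_natCast, Complex.norm_real,
      Real.norm_of_nonneg (by positivity : (0 : ℝ) ≤ 2 * R), mul_pow]
    gcongr ‖c n‖ * ?_
    exact mul_le_mul (mod_cast Nat.lt_two_pow_self.le)
      ((pow_le_pow_left₀ (norm_nonneg y) hy _).trans (pow_le_pow_right₀ hR (Nat.sub_le n 1)))
      (by positivity) (by positivity)
  have hderiv := hasDerivAt_tsum_of_isPreconnected (summable_norm_mul_pow hc _)
    Metric.isOpen_ball (convex_ball 0 R).isPreconnected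
    (fun n y _ => (hasDerivAt_pow n y).const_mul (c n)) hbound
    (Metric.mem_ball_self (zero_lt_one.trans_le hR)) (summable_mul_pow hc 0) hz
  rw [show ∑' n, derivCoeff c n * z ^ n = ∑' n, c n * (n * z ^ (n - 1)) from ?_]
  · exact hderiv
  rw [(Summable.of_norm_bounded (summable_norm_mul_pow hc _)
    fun n => hbound n z hz).tsum_eq_zero_add]
  simp only [derivCoeff, CharP.cast_eq_zero, zero_tsub, pow_zero, mul_one, mul_zero, Nat.cast_add,
    Nat.cast_one, add_tsub_cancel_right, zero_add]
  exact tsum_congr fun n => by ring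

theorem iteratedDeriv_tsum_mul_pow (hc : ∀ n, ‖c n‖ ≤ K * B ^ n / n !) (j : ℕ) :
    iteratedDeriv j (fun w => ∑' n, c n * w ^ n) = fun z => ∑' n, derivCoeff^[j] c n * z ^ n := by
  induction j generalizing c K with
  | zero => rfl
  | succ j ih =>
    have hderiv : deriv (fun w => ∑' n, c n * w ^ n) = fun z => ∑' n, derivCoeff c n * z ^ n :=
      funext fun z => (hasDerivAt_tsum_mul_pow hc z).deriv
    rw [iteratedDeriv_succ', hderiv, ih (norm_derivCoeff_le hc), Function.iterate_succ_apply]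

variable {b : ℕ → ℂ}

theorem norm_mul_derivCoeff_iterate_le (hc : ∀ n, ‖c n‖ ≤ K * B ^ n / n !) (j n : ℕ) :
    ‖b j * derivCoeff^[j] c n‖ ≤ ‖b j‖ * B ^ j * (K * B ^ n / n !) := by
  calc ‖b j * derivCoeff^[j] c n‖ ≤ ‖b j‖ * (K * B ^ j * B ^ n / n !) := by
        rw [norm_mul]; gcongr; exact norm_derivCoeff_iterate_le hc j n
    _ = ‖b j‖ * B ^ j * (K * B ^ n / n !) := by ring

theorem summable_mul_derivCoeff_iterate (hc : ∀ n, ‖c n‖ ≤ K * B ^ n / n !)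
    (hb : Summable fun j => ‖b j‖ * B ^ j) (n : ℕ) :
    Summable fun j => b j * derivCoeff^[j] c n :=
  .of_norm_bounded (hb.mul_right _) fun j => norm_mul_derivCoeff_iterate_le hc j n

theorem norm_tsum_mul_derivCoeff_iterate_le (hc : ∀ n, ‖c n‖ ≤ K * B ^ n / n !)
    (hb : Summable fun j => ‖b j‖ * B ^ j) (n : ℕ) :
    ‖∑' j, b j * derivCoeff^[j] c n‖ ≤ K * (∑' j, ‖b j‖ * B ^ j) * B ^ n / n ! := calc
  ‖∑' j, b j * derivCoeff^[j] c n‖ ≤ ∑' j, ‖b j‖ * B ^ j * (K * B ^ n / n !) :=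
    tsum_of_norm_bounded (hb.mul_right _).hasSum fun j => norm_mul_derivCoeff_iterate_le hc j n
  _ = K * (∑' j, ‖b j‖ * B ^ j) * B ^ n / n ! := by rw [tsum_mul_right]; ring

theorem hasSum_mul_iteratedDeriv_tsum_mul_pow (hc : ∀ n, ‖c n‖ ≤ K * B ^ n / n !) (hB : 0 ≤ B)
    (hb : Summable fun j => ‖b j‖ * B ^ j) (z : ℂ) :
    HasSum (fun j => b j * iteratedDeriv j (fun w => ∑' n, c n * w ^ n) z)
      (∑' n, (∑' j, b j * derivCoeff^[j] c n) * z ^ n) := by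
  set T : ℕ × ℕ → ℂ := fun q => b q.1 * derivCoeff^[q.1] c q.2 * z ^ q.2
  have hK : 0 ≤ K := by simpa using (norm_nonneg _).trans (hc 0)
  have hT : Summable T := by
    refine .of_norm_bounded
      (hb.mul_of_nonneg ((Real.summable_pow_div_factorial (B * ‖z‖)).mul_left K)
        (fun j => by positivity) fun n => by positivity) fun q => ?_
    calc ‖T q‖ ≤ ‖b q.1‖ * B ^ q.1 * (K * B ^ q.2 / q.2 !) * ‖z‖ ^ q.2 := by
          simp only [T, norm_mul (_ * _), norm_pow]
          gcongr
          exact norm_mul_derivCoeff_iterate_le hc _ _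
      _ = ‖b q.1‖ * B ^ q.1 * (K * ((B * ‖z‖) ^ q.2 / q.2 !)) := by ring
  have hrows : ∀ j, HasSum (fun n => T (j, n))
      (b j * iteratedDeriv j (fun w => ∑' n, c n * w ^ n) z) := by
    intro j
    simp only [T, iteratedDeriv_tsum_mul_pow hc, mul_assoc]
    exact (summable_mul_pow (norm_derivCoeff_iterate_le hc j) z).hasSum.mul_left (b j)
  have hcols : ∀ n, HasSum (fun j => T (j, n)) ((∑' j, b j * derivCoeff^[j] c n) * z ^ n) :=
    fun n => (summable_mul_derivCoeff_iterate hc hb n).hasSum.mul_right (z ^ n)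
  rw [((Equiv.prodComm ℕ ℕ).hasSum_iff.2 hT.hasSum).prod_fiberwise hcols |>.tsum_eq]
  exact hT.hasSum.prod_fiberwise hrows

end ExponentialType

theorem infinite_order_operator_action_general (p C b γ β : ℝ) (hp : 1 ≤ p)
    (hγ : 0 < γ) (hβ : 0 < β)
    (bcoef : ℕ → ℂ) (a : ℕ → ℂ) (f : ℂ → ℂ)
    (hbc : ∀ j : ℕ, ‖bcoef j‖ ≤ C * b ^ j / Real.Gamma ((j : ℝ) / p + 1))
    (ha : ∀ ℓ : ℕ, ‖a ℓ‖ ≤ γ * β ^ ℓ / (Nat.factorial ℓ))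
    (hf : ∀ z : ℂ, HasSum (fun ℓ : ℕ => a ℓ * z ^ ℓ) (f z)) :
    ∃ g : ℂ → ℂ, Differentiable ℂ g ∧ ∀ W : ℂ,
      (∀ ℓ : ℕ, Summable (fun j : ℕ =>
        ((Nat.factorial (j + ℓ) : ℂ) / (Nat.factorial ℓ)) * bcoef j * a (ℓ + j))) ∧
      HasSum (fun ℓ : ℕ =>
        (∑' j : ℕ, ((Nat.factorial (j + ℓ) : ℂ) / (Nat.factorial ℓ)) * bcoef j *
          a (ℓ + j)) * W ^ ℓ) (g W) ∧
      HasSum (fun j : ℕ => bcoef j * iteratedDeriv j f W) (g W) ∧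
      ‖g W‖ ≤ γ * C * (∑' k : ℕ, (b * β) ^ k / Real.Gamma ((k : ℝ) / p + 1)) *
        Real.exp (β * ‖W‖) := by
  have hML := (summable_pow_div_Gamma (p := p) (by linarith) (b * β)).mul_left C
  have hbβ (j : ℕ) : ‖bcoef j‖ * β ^ j ≤ C * ((b * β) ^ j / Real.Gamma ((j : ℝ) / p + 1)) := by
    calc ‖bcoef j‖ * β ^ j ≤ C * b ^ j / Real.Gamma ((j : ℝ) / p + 1) * β ^ j := by
          gcongr; exact hbc j
      _ = _ := by ring
  have hS : Summable fun j => ‖bcoef j‖ * β ^ j :=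
    .of_nonneg_of_le (fun j => by positivity) hbβ hML
  have hSE : ∑' j, ‖bcoef j‖ * β ^ j ≤ C * ∑' k : ℕ, (b * β) ^ k / Real.Gamma ((k : ℝ) / p + 1) :=
    (hS.tsum_le_tsum hbβ hML).trans_eq tsum_mul_left
  have hcoef (ℓ j : ℕ) :
      ((j + ℓ)! / ℓ ! : ℂ) * bcoef j * a (ℓ + j) = bcoef j * derivCoeff^[j] a ℓ := by
    rw [derivCoeff_iterate_apply]; ring
  have he := norm_tsum_mul_derivCoeff_iterate_le ha hS
  obtain rfl : f = fun w => ∑' n, a n * w ^ n := funext fun z => (hf z).tsum_eq.symm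
  simp only [hcoef]
  refine ⟨_, fun W => (hasDerivAt_tsum_mul_pow he W).differentiableAt, fun W =>
    ⟨summable_mul_derivCoeff_iterate ha hS, (summable_mul_pow he W).hasSum,
      hasSum_mul_iteratedDeriv_tsum_mul_pow ha hβ.le hS W, ?_⟩⟩
  calc _ ≤ γ * (∑' j, ‖bcoef j‖ * β ^ j) * Real.exp (β * ‖W‖) := norm_tsum_mul_pow_le he W
    _ ≤ _ := by rw [mul_assoc γ C]; gcongr

theorem infinite_order_operator_action (p C b γ β : ℝ) (hp : 1 ≤ p)
    (hC : 0 < C) (hb : 0 < b) (hγ : 0 < γ) (hβ : 0 < β)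
    (bcoef : ℕ → ℂ) (a : ℕ → ℂ) (f : ℂ → ℂ)
    (hbc : ∀ j : ℕ, ‖bcoef j‖ ≤ C * b ^ j / Real.Gamma ((j : ℝ) / p + 1))
    (ha : ∀ ℓ : ℕ, ‖a ℓ‖ ≤ γ * β ^ ℓ / (Nat.factorial ℓ))
    (hf : ∀ z : ℂ, HasSum (fun ℓ : ℕ => a ℓ * z ^ ℓ) (f z)) :
    ∃ g : ℂ → ℂ, Differentiable ℂ g ∧ ∀ W : ℂ,
      (∀ ℓ : ℕ, Summable (fun j : ℕ =>
        ((Nat.factorial (j + ℓ) : ℂ) / (Nat.factorial ℓ)) * bcoef j * a (ℓ + j))) ∧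
      HasSum (fun ℓ : ℕ =>
        (∑' j : ℕ, ((Nat.factorial (j + ℓ) : ℂ) / (Nat.factorial ℓ)) * bcoef j *
          a (ℓ + j)) * W ^ ℓ) (g W) ∧
      HasSum (fun j : ℕ => bcoef j * iteratedDeriv j f W) (g W) ∧
      ‖g W‖ ≤ γ * C * (∑' k : ℕ, (b * β) ^ k / Real.Gamma ((k : ℝ) / p + 1)) *
        Real.exp (β * ‖W‖) :=
  infinite_order_operator_action_general p C b γ β hp hγ hβ bcoef a f hbc ha hf
end

section
/- Let F : ℂ → ℂ be entire and suppose that for every ε > 0 there is A_ε ≥ 0 with |F(Z)| ≤ A_ε·exp(ε·|Z|^q) for all Z ∈ ℂ, where 1 < q ≤ 2. Let χ > −1 and c > 0. Then for every θ ∈ (−π/4, π/4), the integral ∫_0^∞ (t·e^{iθ})^χ · exp(−c·(t·e^{iθ})²) · F(t·e^{iθ}) · e^{iθ} dt converges absolutely and its value is independent of θ; in particular it equals ∫_0^∞ t^χ e^{−ct²} F(t) dt. -/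
/-!
The substitution `t = exp u` turns the ray of angle `θ` into the horizontal line `Im w = θ`, with
integrand `g w = f (exp w) * exp w` for `f z = z ^ χ * exp (-c z²) * F z`; `g` is holomorphic on
`|Im w| < π`. Between the lines `Im w = 0` and `Im w = θ` we have
`Re (exp (2w)) ≥ cos (2θ) · exp (2 Re w)`, so taking `ε = c cos (2θ) / 2` in the growth bound of `F`
(using `|Z|^q ≤ 1 + |Z|²`) gives the majorant `|g w| ≤ C · exp ((χ + 1) Re w - b · exp (2 Re w))`
with `b > 0`. It is integrable and vanishes at both ends of `ℝ`, so Cauchy's theorem on the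
rectangles `[-T, T] × [0, θ]` moves the line integral from `Im w = θ` down to `Im w = 0`.
-/

open MeasureTheory Set Filter Topology Complex
open scoped Interval

section ExpSubstitution

variable {E : Type*} [NormedAddCommGroup E] [NormedSpace ℝ E]

theorem integrableOn_Ioi_zero_iff_integrable_comp_exp (g : ℝ → E) :
    IntegrableOn g (Ioi 0) ↔ Integrable fun u => Real.exp u • g (Real.exp u) := by
  simpa [abs_of_pos (Real.exp_pos _)] using integrableOn_image_iff_integrableOn_abs_deriv_smul
    MeasurableSet.univ (fun x _ => (Real.hasDerivAt_exp x).hasDerivWithinAt)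
    Real.exp_injective.injOn g

theorem integral_Ioi_zero_eq_integral_comp_exp (g : ℝ → E) :
    ∫ t in Ioi 0, g t = ∫ u, Real.exp u • g (Real.exp u) := by
  simpa [abs_of_pos (Real.exp_pos _)] using integral_image_eq_integral_abs_deriv_smul
    MeasurableSet.univ (fun x _ => (Real.hasDerivAt_exp x).hasDerivWithinAt)
    Real.exp_injective.injOn g

end ExpSubstitution

theorem exp_smul_ray_integrand (f : ℂ → ℂ) (θ u : ℝ) :
    Real.exp u • (f (Real.exp u * cexp (θ * I)) * cexp (θ * I)) =
      f (cexp (u + θ * I)) * cexp (u + θ * I) := by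
  rw [Complex.real_smul, ofReal_exp, Complex.exp_add]
  ring

theorem integrableOn_Ioi_ray_iff (f : ℂ → ℂ) (θ : ℝ) :
    IntegrableOn (fun t : ℝ => f (t * cexp (θ * I)) * cexp (θ * I)) (Ioi 0) ↔
      Integrable fun u : ℝ => f (cexp (u + θ * I)) * cexp (u + θ * I) := by
  simp only [integrableOn_Ioi_zero_iff_integrable_comp_exp, exp_smul_ray_integrand]

theorem integral_Ioi_ray_eq (f : ℂ → ℂ) (θ : ℝ) :
    ∫ t in Ioi (0 : ℝ), f (t * cexp (θ * I)) * cexp (θ * I) =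
      ∫ u : ℝ, f (cexp (u + θ * I)) * cexp (u + θ * I) := by
  simp only [integral_Ioi_zero_eq_integral_comp_exp, exp_smul_ray_integrand]

section Strip

variable {E : Type*} [NormedAddCommGroup E]

theorem integrable_comp_add_mul_I_of_norm_le {g : ℂ → E} {y : ℝ}
    (hg : ContinuousOn g (im ⁻¹' {y})) {M : ℝ → ℝ} (hM : Integrable M)
    (hgM : ∀ x : ℝ, ‖g (x + y * I)‖ ≤ M x) :
    Integrable fun x : ℝ => g (x + y * I) :=
  hM.mono' (hg.comp_continuous (by fun_prop) fun x => by simp).aestronglyMeasurable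
    (.of_forall hgM)

variable [NormedSpace ℂ E]

theorem integral_add_mul_I_eq_integral_of_norm_le {g : ℂ → E} {θ : ℝ}
    (hg : DifferentiableOn ℂ g (im ⁻¹' [[0, θ]])) {M : ℝ → ℝ} (hM : Integrable M)
    (hM0 : Tendsto M (cocompact ℝ) (𝓝 0))
    (hgM : ∀ x : ℝ, ∀ y ∈ [[0, θ]], ‖g (x + y * I)‖ ≤ M x) :
    ∫ x : ℝ, g (x + θ * I) = ∫ x : ℝ, g x := by
  have hline : ∀ y ∈ [[0, θ]], Integrable fun x : ℝ => g (x + y * I) := fun y hy =>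
    integrable_comp_add_mul_I_of_norm_le
      (hg.continuousOn.mono (preimage_mono (singleton_subset_iff.2 hy))) hM
      fun x => hgM x y hy
  set V : ℝ → E := fun T => ∫ y in (0 : ℝ)..θ, g (T + y * I)
  have hV : Tendsto V (cocompact ℝ) (𝓝 0) := by
    refine squeeze_zero_norm (fun T => ?_) (by simpa using hM0.mul_const |θ|)
    refine (intervalIntegral.norm_integral_le_of_norm_le_const fun y hy => ?_).trans_eq
      (by rw [sub_zero])
    exact hgM T y (uIoc_subset_uIcc hy)
  have hrect : ∀ T : ℝ, (∫ x in -T..T, g (x + θ * I)) =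
      (∫ x in -T..T, g x) + (I • V T - I • V (-T)) := fun T => by
    have := integral_boundary_rect_eq_zero_of_differentiableOn g (-T : ℝ) (T + θ * I)
      (hg.mono fun z hz => by simpa using hz.2)
    simp only [ofReal_neg, neg_re, ofReal_re, add_re, mul_re, I_re, I_im, ofReal_im, add_im,
      mul_im, neg_im, mul_zero, mul_one, zero_mul, sub_zero, add_zero, zero_add, ofReal_zero,
      neg_zero] at this
    simp only [V, ofReal_neg]
    linear_combination (norm := module) -this
  have hlim := intervalIntegral_tendsto_integral (hline θ right_mem_uIcc)
    tendsto_neg_atTop_atBot tendsto_id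
  have hV' : Tendsto (fun T => I • V T - I • V (-T)) atTop (𝓝 0) := by
    simpa using ((hV.mono_left atTop_le_cocompact).const_smul I).sub
      (((hV.mono_left atBot_le_cocompact).comp tendsto_neg_atTop_atBot).const_smul I)
  refine tendsto_nhds_unique hlim (Tendsto.congr (fun T => (hrect T).symm) ?_)
  simpa using (intervalIntegral_tendsto_integral (by simpa using hline 0 left_mem_uIcc)
    tendsto_neg_atTop_atBot tendsto_id).add hV'

end Strip

theorem rpow_le_one_add_sq {x q : ℝ} (hx : 0 ≤ x) (hq0 : 0 ≤ q) (hq2 : q ≤ 2) :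
    x ^ q ≤ 1 + x ^ 2 := by
  rcases le_total x 1 with h | h
  · linarith [Real.rpow_le_one hx h hq0, sq_nonneg x]
  · have := Real.rpow_le_rpow_of_exponent_le h hq2
    norm_cast at this
    linarith

theorem Real.cos_le_cos_of_abs_le {x y : ℝ} (hxy : |y| ≤ |x|) (hx : |x| ≤ Real.pi) :
    cos x ≤ cos y := by
  rw [← cos_abs x, ← cos_abs y]
  exact cos_le_cos_of_nonneg_of_le_pi (abs_nonneg y) hx hxy

theorem exp_mem_slitPlane_of_abs_im_lt {w : ℂ} (hw : |w.im| < Real.pi) : cexp w ∈ slitPlane := by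
  obtain ⟨hw₁, hw₂⟩ := abs_lt.1 hw
  rw [exp_mem_slitPlane, (toIocMod_eq_self _).2 ⟨hw₁, by linarith⟩]
  exact hw₂.ne

theorem exp_rpow_mul_exp_neg_mul_sq_mul_exp (a b u : ℝ) :
    Real.exp u ^ a * Real.exp (-b * Real.exp u ^ 2) * Real.exp u =
      Real.exp ((a + 1) * u - b * Real.exp (2 * u)) := by
  rw [← Real.exp_mul, sq, ← Real.exp_add u u, ← two_mul, ← Real.exp_add, ← Real.exp_add]
  ring_nf

theorem integrable_exp_mul_sub_mul_exp_two_mul {a b : ℝ} (ha : 0 < a) (hb : 0 < b) :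
    Integrable fun u => Real.exp (a * u - b * Real.exp (2 * u)) := by
  have := (integrableOn_Ioi_zero_iff_integrable_comp_exp _).1
    (integrable_rpow_mul_exp_neg_mul_sq hb (show -1 < a - 1 by linarith)).integrableOn
  refine this.congr (.of_forall fun u => ?_)
  simp only [smul_eq_mul]
  rw [mul_comm, exp_rpow_mul_exp_neg_mul_sq_mul_exp, sub_add_cancel]

theorem tendsto_mul_sub_mul_exp_two_mul_cocompact {a b : ℝ} (ha : 0 < a) (hb : 0 < b) :
    Tendsto (fun u => a * u - b * Real.exp (2 * u)) (cocompact ℝ) atBot := by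
  rw [cocompact_eq_atBot_atTop, tendsto_sup]
  constructor
  · exact tendsto_atBot_mono (fun u => by simp only [id]; nlinarith [Real.exp_pos (2 * u)])
      (tendsto_id.const_mul_atBot ha)
  · refine tendsto_atBot_mono' _ ((eventually_ge_atTop 0).mono fun u hu => ?_)
      (tendsto_id.atTop_mul_atBot₀ (tendsto_atBot_add_const_left _ a
        (tendsto_neg_atTop_atBot.comp (tendsto_id.const_mul_atTop (by positivity : 0 < 2 * b)))))
    have := Real.quadratic_le_exp_of_nonneg (by positivity : 0 ≤ 2 * u)
    simp only [id, Function.comp]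
    nlinarith

theorem norm_cpow_mul_exp_neg_mul_sq_mul_le {F : ℂ → ℂ} {q A ε : ℝ} (hq0 : 0 ≤ q) (hq2 : q ≤ 2)
    (hA : 0 ≤ A) (hε : 0 ≤ ε) (hF : ∀ Z, ‖F Z‖ ≤ A * Real.exp (ε * ‖Z‖ ^ q)) (χ : ℝ) {c δ : ℝ}
    (hc : 0 ≤ c) {z : ℂ} (hz : δ * ‖z‖ ^ 2 ≤ (z ^ 2).re) :
    ‖z ^ (χ : ℂ) * cexp (-c * z ^ 2) * F z‖ ≤
      A * Real.exp ε * (‖z‖ ^ χ * Real.exp (-(c * δ - ε) * ‖z‖ ^ 2)) := by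
  have hFz : ‖F z‖ ≤ A * Real.exp (ε + ε * ‖z‖ ^ 2) :=
    (hF z).trans (by gcongr; nlinarith [rpow_le_one_add_sq (norm_nonneg z) hq0 hq2])
  have hexp : ‖cexp (-c * z ^ 2)‖ ≤ Real.exp (-(c * δ) * ‖z‖ ^ 2) := by
    rw [norm_exp]
    gcongr
    simp only [neg_mul, neg_re, mul_re, ofReal_re, ofReal_im, zero_mul, sub_zero]
    nlinarith
  calc _ = ‖z‖ ^ χ * ‖cexp (-c * z ^ 2)‖ * ‖F z‖ := by rw [norm_mul, norm_mul, norm_cpow_real]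
    _ ≤ ‖z‖ ^ χ * Real.exp (-(c * δ) * ‖z‖ ^ 2) * (A * Real.exp (ε + ε * ‖z‖ ^ 2)) := by gcongr
    _ = _ := by
      rw [show -(c * δ - ε) * ‖z‖ ^ 2 = -(c * δ) * ‖z‖ ^ 2 + ε * ‖z‖ ^ 2 by ring, Real.exp_add,
        Real.exp_add]
      ring

theorem norm_integrand_exp_add_mul_I_le {F : ℂ → ℂ} {q A ε : ℝ} (hq0 : 0 ≤ q) (hq2 : q ≤ 2)
    (hA : 0 ≤ A) (hε : 0 ≤ ε) (hF : ∀ Z, ‖F Z‖ ≤ A * Real.exp (ε * ‖Z‖ ^ q)) (χ : ℝ) {c δ : ℝ}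
    (hc : 0 ≤ c) {u y : ℝ} (hy : δ ≤ Real.cos (2 * y)) :
    ‖cexp (u + y * I) ^ (χ : ℂ) * cexp (-c * cexp (u + y * I) ^ 2) * F (cexp (u + y * I)) *
        cexp (u + y * I)‖ ≤
      A * Real.exp ε * Real.exp ((χ + 1) * u - (c * δ - ε) * Real.exp (2 * u)) := by
  set z := cexp (u + y * I)
  have hz : ‖z‖ = Real.exp u := by simp [z, norm_exp]
  have hz2 : (z ^ 2).re = Real.exp (2 * u) * Real.cos (2 * y) := by
    simp [z, ← Complex.exp_nat_mul, Complex.exp_re]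
  have hδ : δ * ‖z‖ ^ 2 ≤ (z ^ 2).re := by
    rw [hz2, hz, sq, ← Real.exp_add, ← two_mul, mul_comm]
    exact mul_le_mul_of_nonneg_left hy (Real.exp_pos _).le
  calc _ = ‖z ^ (χ : ℂ) * cexp (-c * z ^ 2) * F z‖ * Real.exp u := by rw [norm_mul, hz]
    _ ≤ A * Real.exp ε * (Real.exp u ^ χ * Real.exp (-(c * δ - ε) * Real.exp u ^ 2)) *
        Real.exp u := by
      gcongr
      simpa only [hz] using norm_cpow_mul_exp_neg_mul_sq_mul_le hq0 hq2 hA hε hF χ hc hδ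
    _ = _ := by rw [mul_assoc, exp_rpow_mul_exp_neg_mul_sq_mul_exp]

theorem differentiableOn_exp_integrand {F : ℂ → ℂ} (hF : Differentiable ℂ F) (χ c : ℝ) :
    DifferentiableOn ℂ (fun w => cexp w ^ (χ : ℂ) * cexp (-c * cexp w ^ 2) * F (cexp w) * cexp w)
      {w | |w.im| < Real.pi} := fun w hw =>
  have hexp := differentiableAt_exp (x := w)
  ((((hexp.cpow_const (exp_mem_slitPlane_of_abs_im_lt hw)).mul
    ((hexp.pow 2).const_mul _).cexp).mul ((hF _).comp w hexp)).mul hexp).differentiableWithinAt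

theorem fresnel_ray_independence (F : ℂ → ℂ) (hF : Differentiable ℂ F)
    (q : ℝ) (hq1 : 1 < q) (hq2 : q ≤ 2)
    (hgrow : ∀ ε > (0:ℝ), ∃ A ≥ (0:ℝ), ∀ Z : ℂ, ‖F Z‖ ≤ A * Real.exp (ε * ‖Z‖ ^ q))
    (χ : ℝ) (hχ : -1 < χ) (c : ℝ) (hc : 0 < c) :
    ∀ θ : ℝ, -(Real.pi / 4) < θ → θ < Real.pi / 4 →
      IntegrableOn (fun t : ℝ =>
          ((t : ℂ) * Complex.exp (θ * Complex.I)) ^ (χ : ℂ) *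
            Complex.exp (-(c : ℂ) * ((t : ℂ) * Complex.exp (θ * Complex.I)) ^ 2) *
            F ((t : ℂ) * Complex.exp (θ * Complex.I)) *
            Complex.exp (θ * Complex.I)) (Set.Ioi 0) ∧
      ∫ t in Set.Ioi (0:ℝ),
          ((t : ℂ) * Complex.exp (θ * Complex.I)) ^ (χ : ℂ) *
            Complex.exp (-(c : ℂ) * ((t : ℂ) * Complex.exp (θ * Complex.I)) ^ 2) *
            F ((t : ℂ) * Complex.exp (θ * Complex.I)) *
            Complex.exp (θ * Complex.I) =
        ∫ t in Set.Ioi (0:ℝ),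
          (t : ℂ) ^ (χ : ℂ) * Complex.exp (-(c : ℂ) * (t : ℂ) ^ 2) * F t := by
  intro θ hθ₁ hθ₂
  set f : ℂ → ℂ := fun z => z ^ (χ : ℂ) * cexp (-c * z ^ 2) * F z
  have hθ : |θ| < Real.pi / 4 := abs_lt.2 ⟨hθ₁, hθ₂⟩
  set δ := Real.cos (2 * θ)
  have hδ : 0 < δ := Real.cos_pos_of_mem_Ioo ⟨by linarith, by linarith⟩
  obtain ⟨A, hA, hFA⟩ := hgrow (c * δ / 2) (by positivity)
  set M : ℝ → ℝ := fun u =>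
    A * Real.exp (c * δ / 2) * Real.exp ((χ + 1) * u - (c * δ - c * δ / 2) * Real.exp (2 * u))
  have hb : 0 < c * δ - c * δ / 2 := by linarith [mul_pos hc hδ]
  have hM : Integrable M := (integrable_exp_mul_sub_mul_exp_two_mul (by linarith) hb).const_mul _
  have hM0 : Tendsto M (cocompact ℝ) (𝓝 0) := by
    simpa using (Real.tendsto_exp_atBot.comp
      (tendsto_mul_sub_mul_exp_two_mul_cocompact (by linarith) hb)).const_mul _
  have hfM : ∀ x : ℝ, ∀ y ∈ [[0, θ]], ‖f (cexp (x + y * I)) * cexp (x + y * I)‖ ≤ M x :=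
    fun x y hy => norm_integrand_exp_add_mul_I_le (by linarith) hq2 hA (by positivity) hFA χ hc.le
      (Real.cos_le_cos_of_abs_le (by simpa using abs_sub_left_of_mem_uIcc hy)
        (by rw [abs_mul, abs_two]; linarith))
  have hdiff : DifferentiableOn ℂ (fun w => f (cexp w) * cexp w) (im ⁻¹' [[0, θ]]) :=
    (differentiableOn_exp_integrand hF χ c).mono fun w hw => by
      have := abs_sub_left_of_mem_uIcc hw
      rw [sub_zero, sub_zero] at this
      exact this.trans_lt (by linarith [Real.pi_pos])
  refine ⟨(integrableOn_Ioi_ray_iff f θ).2 (integrable_comp_add_mul_I_of_norm_le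
    (hdiff.continuousOn.mono (preimage_mono (singleton_subset_iff.2 right_mem_uIcc))) hM
    fun x => hfM x θ right_mem_uIcc), ?_⟩
  calc _ = ∫ u : ℝ, f (cexp (u + θ * I)) * cexp (u + θ * I) := integral_Ioi_ray_eq f θ
    _ = ∫ u : ℝ, f (cexp u) * cexp u := integral_add_mul_I_eq_integral_of_norm_le hdiff hM hM0 hfM
    _ = _ := by simpa [f] using (integral_Ioi_ray_eq f 0).symm
end

section
/- Let P ∈ ℂ[X], a ∈ ℝ, C_j(N,a) = binom(N,j)((1+a)/2)^{N−j}((1−a)/2)^j, and ψ_N(t,x) = Σ_{j=0}^N C_j(N,a)·exp(i·P(1−2j/N)·t)·exp(i·(1−2j/N)·x). Then for every compact set K ⊂ ℝ², ψ_N converges uniformly on K to (t,x) ↦ exp(i·P(a)·t)·exp(i·a·x) as N → ∞. -/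
/-
The weights `C_j(N,a)` are the law of the number `j` of minus signs among `N` independent signs
`ε_i = ±1` of weights `(1 + a)/2` and `(1 - a)/2` (signed weights when `|a| > 1`), and `1 - 2j/N`
is their mean. Expanding `(ε_1 + ... + ε_N)^s` over the maps `f : Fin s → Fin N`, independence
turns the contribution of `f` into `∏_i a ^ (#f⁻¹(i) mod 2)`, which is `a^s` when `f` is injective.
At most `s² N^(s-1)` maps are not injective, so the `s`-th moment of the mean is
`a^s + O(max(1,|a|)^s s² / N)`. Summing over the exponential series of `exp (i (P(ξ) t + ξ x))`
gives an `O(1/N)` error with constant `exp (4 max(1,|a|)^d ‖coefficients‖₁)`, which is bounded for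
`(t, x)` in a compact set.
-/

open Finset

section Fibers

variable {ι κ : Type*} [Fintype ι] [Fintype κ] [DecidableEq κ]

theorem prod_comp_eq_prod_pow_card_fiber {M : Type*} [CommMonoid M] (h : κ → M) (f : ι → κ) :
    ∏ k, h (f k) = ∏ i, h i ^ #{k | f k = i} := by
  rw [← prod_fiberwise univ f]
  refine prod_congr rfl fun i _ ↦ ?_
  rw [prod_congr rfl fun k hk ↦ by rw [(mem_filter.1 hk).2], prod_const]

theorem sum_card_fiber (f : ι → κ) : ∑ i, #{k | f k = i} = Fintype.card ι := by
  rw [sum_card_fiberwise_eq_card_filter]; simp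

theorem prod_pow_card_fiber_mod_two_of_injective {M : Type*} [CommMonoid M] (a : M) {f : ι → κ}
    (hf : Function.Injective f) :
    ∏ i, a ^ (#{k | f k = i} % 2) = a ^ Fintype.card ι := by
  have hfib : ∀ i, #{k | f k = i} < 2 := fun i ↦
    Nat.lt_succ_of_le <| card_le_one.2 fun k hk l hl ↦ hf <| by
      rw [(mem_filter.1 hk).2, (mem_filter.1 hl).2]
  simp_rw [Nat.mod_eq_of_lt (hfib _), prod_pow_eq_pow_sum, sum_card_fiber]

theorem norm_prod_pow_card_fiber_mod_two_le {𝕜 : Type*} [NormedField 𝕜] (a : 𝕜) (f : ι → κ) :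
    ‖∏ i, a ^ (#{k | f k = i} % 2)‖ ≤ max 1 ‖a‖ ^ Fintype.card ι := by
  rw [norm_prod, ← sum_card_fiber f, ← prod_pow_eq_pow_sum]
  refine prod_le_prod (fun _ _ ↦ norm_nonneg _) fun i _ ↦ ?_
  rw [norm_pow]
  calc ‖a‖ ^ (#{k | f k = i} % 2) ≤ max 1 ‖a‖ ^ (#{k | f k = i} % 2) :=
        pow_le_pow_left₀ (norm_nonneg a) (le_max_right _ _) _
    _ ≤ max 1 ‖a‖ ^ #{k | f k = i} := pow_le_pow_right₀ (le_max_left _ _) (Nat.mod_le _ _)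

end Fibers

theorem natCast_sub_two_mul_card_eq_sum_sign {R : Type*} [CommRing R] {N : ℕ} (t : Finset (Fin N)) :
    ((N : R) - 2 * #t) = ∑ i, if i ∈ t then -1 else 1 := by
  have ht : #t ≤ N := (card_le_univ t).trans_eq (Fintype.card_fin N)
  rw [sum_ite, sum_const, sum_const, filter_mem_eq_inter, univ_inter, filter_not,
    filter_mem_eq_inter, univ_inter, card_univ_sdiff, Fintype.card_fin, nsmul_eq_mul,
    nsmul_eq_mul, Nat.cast_sub ht]
  ring

theorem sum_choose_mul_sub_two_mul_pow {R : Type*} [CommRing R] (u v : R) (N s : ℕ) :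
    ∑ j ∈ range (N + 1), N.choose j * u ^ (N - j) * v ^ j * ((N : R) - 2 * j) ^ s =
      ∑ f : Fin s → Fin N, ∏ i, (u + (-1) ^ #{k | f k = i} * v) := by
  calc ∑ j ∈ range (N + 1), N.choose j * u ^ (N - j) * v ^ j * ((N : R) - 2 * j) ^ s
      = ∑ t : Finset (Fin N), u ^ (N - #t) * v ^ #t * ((N : R) - 2 * #t) ^ s := by
        rw [← powerset_univ,
          sum_powerset_apply_card (fun j ↦ u ^ (N - j) * v ^ j * ((N : R) - 2 * j) ^ s), card_univ,
          Fintype.card_fin]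
        simp only [nsmul_eq_mul, mul_assoc]
    _ = ∑ t : Finset (Fin N), ∑ f : Fin s → Fin N,
          u ^ (N - #t) * v ^ #t * ∏ i ∈ t, (-1) ^ #{k | f k = i} := by
        refine sum_congr rfl fun t _ ↦ ?_
        rw [natCast_sub_two_mul_card_eq_sum_sign, Fintype.sum_pow, mul_sum]
        refine sum_congr rfl fun f _ ↦ ?_
        rw [prod_comp_eq_prod_pow_card_fiber (fun i ↦ if i ∈ t then (-1 : R) else 1) f]
        simp [ite_pow]
    _ = ∑ f : Fin s → Fin N, ∏ i, (u + (-1) ^ #{k | f k = i} * v) := by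
        rw [sum_comm]
        refine sum_congr rfl fun f _ ↦ ?_
        rw [← powerset_univ]
        simp_rw [add_comm u, prod_add, prod_mul_distrib, prod_const, card_univ_sdiff,
          Fintype.card_fin]
        exact sum_congr rfl fun t _ ↦ by ring

theorem pow_mul_le_descFactorial_mul_add (N s : ℕ) :
    N ^ s * N ≤ N.descFactorial s * N + s ^ 2 * N ^ s := by
  induction s with
  | zero => simp
  | succ s ih =>
    have hle := Nat.descFactorial_le_pow N s
    have hsplit : N ≤ N - s + s := by omega
    have h1 : N.descFactorial s * N ≤ N.descFactorial s * (N - s) + s * N ^ s := by nlinarith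
    rw [Nat.descFactorial_succ, pow_succ]
    nlinarith [Nat.mul_le_mul_right N ih, Nat.mul_le_mul_right N h1, Nat.zero_le (s * N ^ s * N),
      Nat.zero_le (N ^ s * N)]

theorem card_not_injective_mul_le (s N : ℕ) :
    #{f : Fin s → Fin N | ¬ Function.Injective f} * N ≤ s ^ 2 * N ^ s := by
  have hinj : #{f : Fin s → Fin N | Function.Injective f} = N.descFactorial s := by
    rw [← Fintype.card_subtype, Fintype.card_congr (Equiv.subtypeInjectiveEquivEmbedding _ _),
      Fintype.card_embedding_eq, Fintype.card_fin, Fintype.card_fin]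
  have hsplit := card_filter_add_card_filter_not (s := (univ : Finset (Fin s → Fin N)))
    (fun f ↦ Function.Injective f)
  rw [hinj, card_univ, Fintype.card_fun, Fintype.card_fin, Fintype.card_fin] at hsplit
  have hmul : N.descFactorial s * N + #{f : Fin s → Fin N | ¬ Function.Injective f} * N =
      N ^ s * N := by rw [← add_mul, hsplit]
  linarith [pow_mul_le_descFactorial_mul_add N s]

/-- `ψ_N(t, x) = binomAvg a N (fun ξ ↦ exp (i P(ξ) t) * exp (i ξ x))`. -/
noncomputable def binomAvg (a : ℂ) (N : ℕ) : (ℂ → ℂ) →L[ℂ] ℂ :=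
  ∑ j ∈ range (N + 1), (N.choose j * ((1 + a) / 2) ^ (N - j) * ((1 - a) / 2) ^ j : ℂ) •
    ContinuousLinearMap.proj (R := ℂ) (φ := fun _ ↦ ℂ) (1 - 2 * (j : ℂ) / N)

theorem binomAvg_apply (a : ℂ) (N : ℕ) (g : ℂ → ℂ) :
    binomAvg a N g = ∑ j ∈ range (N + 1),
      N.choose j * ((1 + a) / 2) ^ (N - j) * ((1 - a) / 2) ^ j * g (1 - 2 * j / N) := by
  simp [binomAvg]

theorem one_add_div_two_add_neg_one_pow_mul (a : ℂ) (c : ℕ) :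
    (1 + a) / 2 + (-1) ^ c * ((1 - a) / 2) = a ^ (c % 2) := by
  rcases Nat.even_or_odd c with hc | hc
  · rw [hc.neg_one_pow, Nat.even_iff.1 hc]; ring
  · rw [hc.neg_one_pow, Nat.odd_iff.1 hc]; ring

theorem binomAvg_pow (a : ℂ) {N : ℕ} (hN : N ≠ 0) (s : ℕ) :
    binomAvg a N (· ^ s) = (∑ f : Fin s → Fin N, ∏ i, a ^ (#{k | f k = i} % 2)) / N ^ s := by
  rw [binomAvg_apply]
  simp_rw [← one_add_div_two_add_neg_one_pow_mul, ← sum_choose_mul_sub_two_mul_pow, sum_div]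
  refine sum_congr rfl fun j _ ↦ ?_
  have hN' : (N : ℂ) ≠ 0 := Nat.cast_ne_zero.2 hN
  rw [eq_div_iff (pow_ne_zero s hN'), mul_assoc, ← mul_pow]
  congr 2
  field_simp

theorem norm_binomAvg_pow_sub_pow_le (a : ℂ) {N : ℕ} (hN : 0 < N) (s : ℕ) :
    ‖binomAvg a N (· ^ s) - a ^ s‖ ≤ 2 * max 1 ‖a‖ ^ s * s ^ 2 / N := by
  set A := max 1 ‖a‖
  set T : (Fin s → Fin N) → ℂ := fun f ↦ ∏ i, a ^ (#{k | f k = i} % 2)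
  have hN' : (N : ℂ) ≠ 0 := Nat.cast_ne_zero.2 hN.ne'
  have hdiff : binomAvg a N (· ^ s) - a ^ s =
      (∑ f ∈ {f | ¬ Function.Injective f}, (T f - a ^ s)) / N ^ s := by
    rw [sum_filter_of_ne (p := fun f ↦ ¬ Function.Injective f) fun f _ hf hinj ↦ hf (by
        simp only [T, prod_pow_card_fiber_mod_two_of_injective a hinj, Fintype.card_fin, sub_self]),
      sum_sub_distrib, sum_const, card_univ, Fintype.card_fun, Fintype.card_fin, Fintype.card_fin,
      nsmul_eq_mul, binomAvg_pow a hN.ne', sub_div, Nat.cast_pow,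
      mul_div_cancel_left₀ _ (pow_ne_zero s hN')]
  have hterm : ∀ f, ‖T f - a ^ s‖ ≤ 2 * A ^ s := fun f ↦ by
    have hT : ‖T f‖ ≤ A ^ s := by
      simpa only [Fintype.card_fin] using norm_prod_pow_card_fiber_mod_two_le a f
    have ha : ‖a ^ s‖ ≤ A ^ s := by
      rw [norm_pow]; exact pow_le_pow_left₀ (norm_nonneg a) (le_max_right _ _) s
    linarith [norm_sub_le (T f) (a ^ s)]
  have hcount : (#{f : Fin s → Fin N | ¬ Function.Injective f} : ℝ) * N ≤ s ^ 2 * N ^ s := by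
    exact_mod_cast card_not_injective_mul_le s N
  have hNpos : (0 : ℝ) < N := Nat.cast_pos.2 hN
  rw [hdiff, norm_div, norm_pow, Complex.norm_natCast]
  calc ‖∑ f ∈ {f | ¬ Function.Injective f}, (T f - a ^ s)‖ / (N : ℝ) ^ s
      ≤ #{f : Fin s → Fin N | ¬ Function.Injective f} * (2 * A ^ s) / (N : ℝ) ^ s := by
        gcongr
        simpa using norm_sum_le_of_le _ fun f _ ↦ hterm f
    _ ≤ 2 * A ^ s * s ^ 2 / N := by
        rw [div_le_div_iff₀ (by positivity) hNpos]
        have hA : 0 ≤ 2 * A ^ s := by positivity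
        nlinarith [mul_le_mul_of_nonneg_left hcount hA]

theorem norm_binomAvg_sum_monomial_sub_le (a : ℂ) {N : ℕ} (hN : 0 < N) {ι : Type*} (s : Finset ι)
    (c : ι → ℂ) (e : ι → ℕ) {D : ℕ} (he : ∀ i ∈ s, e i ≤ D) :
    ‖binomAvg a N (fun ξ ↦ ∑ i ∈ s, c i * ξ ^ e i) - ∑ i ∈ s, c i * a ^ e i‖ ≤
      (∑ i ∈ s, ‖c i‖) * (2 * max 1 ‖a‖ ^ D * D ^ 2 / N) := by
  have hfun : (fun ξ ↦ ∑ i ∈ s, c i * ξ ^ e i) = ∑ i ∈ s, c i • (· ^ e i) := by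
    ext ξ; simp [Finset.sum_apply]
  rw [hfun, map_sum, ← sum_sub_distrib, sum_mul]
  refine norm_sum_le_of_le _ fun i hi ↦ ?_
  rw [map_smul, smul_eq_mul, ← mul_sub, norm_mul]
  gcongr
  refine (norm_binomAvg_pow_sub_pow_le a hN (e i)).trans ?_
  have hei := he i hi
  gcongr
  exact le_max_left _ _

theorem norm_binomAvg_sum_pow_sub_le (a : ℂ) {N : ℕ} (hN : 0 < N) {d : ℕ} (b : Fin (d + 1) → ℂ)
    (m : ℕ) :
    ‖binomAvg a N (fun ξ ↦ (∑ r, b r * ξ ^ (r : ℕ)) ^ m) - (∑ r, b r * a ^ (r : ℕ)) ^ m‖ ≤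
      (∑ r, ‖b r‖) ^ m * (2 * max 1 ‖a‖ ^ (d * m) * (d * m) ^ 2 / N) := by
  have hexpand : ∀ ξ : ℂ, (∑ r, b r * ξ ^ (r : ℕ)) ^ m =
      ∑ g : Fin m → Fin (d + 1), (∏ k, b (g k)) * ξ ^ (∑ k, (g k : ℕ)) := fun ξ ↦ by
    simp_rw [Fintype.sum_pow, prod_mul_distrib, prod_pow_eq_pow_sum]
  have hdeg : ∀ g ∈ (univ : Finset (Fin m → Fin (d + 1))), ∑ k, (g k : ℕ) ≤ d * m := fun g _ ↦ by
    simpa [mul_comm] using sum_le_sum fun k (_ : k ∈ univ) ↦ Nat.lt_succ_iff.1 (g k).is_lt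
  simp_rw [hexpand]
  convert norm_binomAvg_sum_monomial_sub_le a hN univ _ _ hdeg using 2
  simp_rw [Fintype.sum_pow, norm_prod]
  push_cast
  rfl

theorem sq_le_four_pow (m : ℕ) : m ^ 2 ≤ 4 ^ m :=
  calc m ^ 2 ≤ (2 ^ m) ^ 2 := Nat.pow_le_pow_left Nat.lt_two_pow_self.le 2
    _ = 4 ^ m := by rw [← pow_mul, mul_comm, pow_mul]; norm_num

theorem norm_binomAvg_exp_sum_sub_le (a : ℂ) {N : ℕ} (hN : 0 < N) {d : ℕ} (b : Fin (d + 1) → ℂ) :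
    ‖binomAvg a N (fun ξ ↦ Complex.exp (∑ r, b r * ξ ^ (r : ℕ))) -
        Complex.exp (∑ r, b r * a ^ (r : ℕ))‖ ≤
      2 * d ^ 2 * Real.exp (4 * max 1 ‖a‖ ^ d * ∑ r, ‖b r‖) / N := by
  set A := max 1 ‖a‖
  set S := ∑ r, ‖b r‖
  set Z : ℂ → ℂ := fun ξ ↦ ∑ r, b r * ξ ^ (r : ℕ)
  have hL : HasSum (fun m ↦ binomAvg a N (fun ξ ↦ Z ξ ^ m / m.factorial) - Z a ^ m / m.factorial)
      (binomAvg a N (fun ξ ↦ Complex.exp (Z ξ)) - Complex.exp (Z a)) := by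
    simp only [Complex.exp_eq_exp_ℂ]
    exact ((Pi.hasSum.2 fun ξ ↦ NormedSpace.expSeries_div_hasSum_exp (Z ξ)).mapL
      (binomAvg a N)).sub (NormedSpace.expSeries_div_hasSum_exp (Z a))
  have hR : HasSum (fun m : ℕ ↦ 2 * d ^ 2 / N * ((4 * A ^ d * S) ^ m / m.factorial))
      (2 * d ^ 2 / N * Real.exp (4 * A ^ d * S)) := by
    rw [Real.exp_eq_exp_ℝ]
    exact (NormedSpace.expSeries_div_hasSum_exp (𝔸 := ℝ) (4 * A ^ d * S)).mul_left
      (2 * (d : ℝ) ^ 2 / N)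
  refine (hL.norm_le_of_bounded hR fun m ↦ ?_).trans_eq (by ring)
  have hdiv : (fun ξ ↦ Z ξ ^ m / m.factorial) = (m.factorial : ℂ)⁻¹ • fun ξ ↦ Z ξ ^ m := by
    ext ξ; simp [div_eq_inv_mul]
  rw [hdiv, map_smul, smul_eq_mul, div_eq_inv_mul (Z a ^ m), ← mul_sub, norm_mul, norm_inv,
    Complex.norm_natCast, inv_mul_eq_div, mul_div_assoc']
  gcongr ?_ / _
  refine (norm_binomAvg_sum_pow_sub_le a hN b m).trans ?_
  calc S ^ m * (2 * A ^ (d * m) * ((d : ℝ) * m) ^ 2 / N)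
      = 2 * d ^ 2 / N * ((A ^ d * S) ^ m * (m : ℝ) ^ 2) := by ring
    _ ≤ 2 * d ^ 2 / N * ((A ^ d * S) ^ m * 4 ^ m) := by gcongr; exact_mod_cast sq_le_four_pow m
    _ = 2 * d ^ 2 / N * (4 * A ^ d * S) ^ m := by ring

theorem tendstoUniformlyOn_of_norm_sub_le_div {α E : Type*} [SeminormedAddCommGroup E]
    {F : ℕ → α → E} {f : α → E} {K : Set α} (C : ℝ)
    (h : ∀ N, 0 < N → ∀ q ∈ K, ‖F N q - f q‖ ≤ C / N) : TendstoUniformlyOn F f Filter.atTop K := by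
  rw [Metric.tendstoUniformlyOn_iff]
  intro ε hε
  filter_upwards [(tendsto_const_div_atTop_nhds_zero_nat C).eventually (gt_mem_nhds hε),
    Filter.eventually_gt_atTop 0] with N hNε hN q hq
  rw [dist_eq_norm, norm_sub_rev]
  exact (h N hN q hq).trans_lt hNε

open Polynomial in
theorem exp_mul_exp_eq_exp_sum_coeff (P : ℂ[X]) (t x ξ : ℂ) :
    Complex.exp (Complex.I * P.eval ξ * t) * Complex.exp (Complex.I * ξ * x) =
      Complex.exp (∑ r : Fin (P.natDegree + 1 + 1),
        (C (Complex.I * t) * P + C (Complex.I * x) * X).coeff r * ξ ^ (r : ℕ)) := by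
  have hdeg : (C (Complex.I * t) * P + C (Complex.I * x) * X).natDegree < P.natDegree + 1 + 1 :=
    (natDegree_add_le _ _).trans_lt <| max_lt ((natDegree_C_mul_le _ _).trans_lt (by omega))
      ((natDegree_C_mul_le _ _).trans_lt (natDegree_X_le.trans_lt (by omega)))
  rw [← Complex.exp_add, Fin.sum_univ_eq_sum_range (fun r ↦ _ * ξ ^ r), ← eval_eq_sum_range' hdeg]
  simp only [eval_add, eval_mul, eval_C, eval_X]
  ring_nf

theorem psiN_tendsto_uniformly (P : Polynomial ℂ) (a : ℝ)
    (K : Set (ℝ × ℝ)) (hK : IsCompact K) :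
    TendstoUniformlyOn
      (fun (N : ℕ) (q : ℝ × ℝ) =>
        ∑ j ∈ Finset.range (N + 1),
          (N.choose j : ℂ) * ((1 + (a : ℂ)) / 2) ^ (N - j) * ((1 - (a : ℂ)) / 2) ^ j *
            Complex.exp (Complex.I * P.eval (1 - 2 * (j : ℂ) / N) * q.1) *
            Complex.exp (Complex.I * (1 - 2 * (j : ℂ) / N) * q.2))
      (fun q : ℝ × ℝ =>
        Complex.exp (Complex.I * P.eval (a : ℂ) * q.1) *
          Complex.exp (Complex.I * (a : ℂ) * q.2))
      Filter.atTop K := by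
  let b (q : ℝ × ℝ) (r : Fin (P.natDegree + 1 + 1)) : ℂ :=
    (Polynomial.C (Complex.I * q.1) * P + Polynomial.C (Complex.I * q.2) * Polynomial.X).coeff r
  obtain ⟨S, hS⟩ := hK.exists_bound_of_continuousOn (f := fun q ↦ ∑ r, ‖b q r‖) <| by
    simp only [b, Polynomial.coeff_add, Polynomial.coeff_C_mul, Polynomial.coeff_X]
    fun_prop
  refine tendstoUniformlyOn_of_norm_sub_le_div
    (2 * (P.natDegree + 1 : ℕ) ^ 2 * Real.exp (4 * max 1 ‖(a : ℂ)‖ ^ (P.natDegree + 1) * S))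
    fun N hN q hq ↦ ?_
  have hψ := norm_binomAvg_exp_sum_sub_le a hN (b q)
  simp only [b, ← exp_mul_exp_eq_exp_sum_coeff, binomAvg_apply] at hψ
  simp only [← mul_assoc] at hψ
  refine hψ.trans ?_
  gcongr
  exact (le_abs_self _).trans (hS q hq)
end

section
/- Let a ∈ ℝ, λ ∈ ℝ, and for each N ≥ 1 let F_N(x,a) = Σ_{j=0}^N C_j(N,a)·exp(i(1−2j/N)x) with C_j(N,a) = binom(N,j)((1+a)/2)^{N−j}((1−a)/2)^j. Then for every k ∈ ℕ, the k-th derivative d^k/dx^k F_N(x,a) converges to (ia)^k·exp(iax) uniformly on every compact subset of ℝ as N → ∞. -/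
/-!
By the binomial theorem `F_N(z) = φ(iz/N)^N`, where `φ(w) = (1-a)/2 e^{-w} + (1+a)/2 e^{w}`.
Since `φ(w) = e^{aw} + O(w²)`, comparing `N`-th powers gives `F_N(z) = e^{iaz} + O(1/N)` uniformly
on discs, so `F_N → e^{iaz}` locally uniformly on `ℂ`. The `F_N` are entire, so by Weierstrass all
their derivatives converge locally uniformly too, and restricting to a compact subset of `ℝ` gives
the claim.
-/

open Complex Filter Metric Set

section PowSubPow

variable {R : Type*} [NormedCommRing R] [NormOneClass R]

lemma norm_pow_sub_pow_le_s16 {A B : R} {m : ℝ} (hA : ‖A‖ ≤ m) (hB : ‖B‖ ≤ m) (n : ℕ) :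
    ‖A ^ n - B ^ n‖ ≤ n * m ^ (n - 1) * ‖A - B‖ := by
  rw [← geom_sum₂_mul]
  refine (norm_mul_le _ _).trans (mul_le_mul_of_nonneg_right ?_ (norm_nonneg _))
  have hm : 0 ≤ m := (norm_nonneg _).trans hA
  calc ‖∑ i ∈ Finset.range n, A ^ i * B ^ (n - 1 - i)‖
      ≤ ∑ i ∈ Finset.range n, ‖A ^ i * B ^ (n - 1 - i)‖ := norm_sum_le _ _
    _ ≤ ∑ _i ∈ Finset.range n, m ^ (n - 1) := by
      refine Finset.sum_le_sum fun i hi => ?_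
      have hadd : i + (n - 1 - i) = n - 1 := by grind
      calc ‖A ^ i * B ^ (n - 1 - i)‖ ≤ ‖A‖ ^ i * ‖B‖ ^ (n - 1 - i) :=
            (norm_mul_le _ _).trans (by gcongr <;> exact norm_pow_le _ _)
        _ ≤ m ^ i * m ^ (n - 1 - i) := by gcongr
        _ = m ^ (n - 1) := by rw [← pow_add, hadd]
    _ = n * m ^ (n - 1) := by simp

lemma norm_pow_sub_pow_le_of_norm_le_exp {A B : R} {b c : ℝ} (hb : 0 ≤ b)
    (hB : ‖B‖ ≤ Real.exp b) (hAB : ‖A - B‖ ≤ c) (n : ℕ) :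
    ‖A ^ n - B ^ n‖ ≤ n * Real.exp (n * (b + c)) * c := by
  have hc : 0 ≤ c := (norm_nonneg _).trans hAB
  have hBm : ‖B‖ ≤ Real.exp (b + c) := hB.trans (Real.exp_le_exp.mpr (by linarith))
  have hAm : ‖A‖ ≤ Real.exp (b + c) :=
    calc ‖A‖ ≤ ‖B‖ + ‖A - B‖ := norm_le_norm_add_norm_sub' A B
      _ ≤ Real.exp b * (1 + c) := by nlinarith [Real.one_le_exp hb]
      _ ≤ Real.exp b * Real.exp c := by gcongr; linarith [Real.add_one_le_exp c]
      _ = Real.exp (b + c) := (Real.exp_add b c).symm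
  calc ‖A ^ n - B ^ n‖ ≤ n * Real.exp (b + c) ^ (n - 1) * ‖A - B‖ :=
        norm_pow_sub_pow_le_s16 hAm hBm n
    _ ≤ n * Real.exp (b + c) ^ n * c := by
        gcongr
        exacts [Real.one_le_exp (by linarith), n.sub_le 1]
    _ = n * Real.exp (n * (b + c)) * c := by rw [Real.exp_nat_mul]

end PowSubPow

/-- The moment generating function `w ↦ E[e^{wX}]` of a `±1`-valued `X` with mean `a`. -/
noncomputable def stepMGF (a : ℝ) (w : ℂ) : ℂ :=
  (1 - a) / 2 * exp (-w) + (1 + a) / 2 * exp w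

lemma norm_stepMGF_sub_exp_le (a : ℝ) {w : ℂ} (hw : ‖w‖ ≤ 1) (haw : |a| * ‖w‖ ≤ 1) :
    ‖stepMGF a w - exp (a * w)‖ ≤ (1 + |a| + a ^ 2) * ‖w‖ ^ 2 := by
  -- the first-order terms cancel because `X` has mean `a`
  have hsplit : stepMGF a w - exp (a * w) =
      (1 - a) / 2 * (exp (-w) - 1 - -w) + (1 + a) / 2 * (exp w - 1 - w) -
        (exp (a * w) - 1 - a * w) := by
    unfold stepMGF; ring
  have hminus : ‖(1 - (a : ℂ)) / 2‖ ≤ (1 + |a|) / 2 := by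
    rw [norm_div, Complex.norm_two]
    gcongr
    simpa using norm_sub_le (1 : ℂ) a
  have hplus : ‖(1 + (a : ℂ)) / 2‖ ≤ (1 + |a|) / 2 := by
    rw [norm_div, Complex.norm_two]
    gcongr
    simpa using norm_add_le (1 : ℂ) a
  have haw' : ‖(a : ℂ) * w‖ ≤ 1 := by rwa [norm_mul, norm_real, Real.norm_eq_abs]
  have e₁ := norm_exp_sub_one_sub_id_le (x := -w) (by rwa [norm_neg])
  have e₂ := norm_exp_sub_one_sub_id_le hw
  have e₃ := norm_exp_sub_one_sub_id_le haw'
  rw [norm_neg] at e₁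
  rw [norm_mul, norm_real, Real.norm_eq_abs, mul_pow, sq_abs] at e₃
  rw [hsplit]
  calc _ ≤ ‖(1 - (a : ℂ)) / 2‖ * ‖exp (-w) - 1 - -w‖ +
        ‖(1 + (a : ℂ)) / 2‖ * ‖exp w - 1 - w‖ + ‖exp (a * w) - 1 - a * w‖ := by
        refine (norm_sub_le _ _).trans (add_le_add_left ((norm_add_le _ _).trans ?_) _)
        rw [norm_mul, norm_mul]
    _ ≤ (1 + |a|) / 2 * ‖w‖ ^ 2 + (1 + |a|) / 2 * ‖w‖ ^ 2 + a ^ 2 * ‖w‖ ^ 2 := by gcongr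
    _ = (1 + |a| + a ^ 2) * ‖w‖ ^ 2 := by ring

lemma norm_stepMGF_pow_sub_exp_le (a : ℝ) {R : ℝ} {N : ℕ} (hN : N ≠ 0)
    (hRN : (1 + |a|) * R ≤ N) {z : ℂ} (hz : ‖z‖ ≤ R) :
    ‖stepMGF a (I * z / N) ^ N - exp (I * a * z)‖ ≤
      Real.exp (|a| * R + (1 + |a| + a ^ 2) * R ^ 2) * (1 + |a| + a ^ 2) * R ^ 2 / N := by
  set C := 1 + |a| + a ^ 2
  set w := I * z / N
  have hNpos : (0 : ℝ) < N := by positivity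
  have hR : 0 ≤ R := (norm_nonneg z).trans hz
  have hw : ‖w‖ ≤ R / N := by
    simp only [w, norm_div, norm_mul, norm_I, one_mul, norm_natCast]
    gcongr
  have hRN' : (1 + |a|) * (R / N) ≤ 1 := by
    rwa [mul_div_assoc', div_le_one hNpos]
  have hw₁ : ‖w‖ ≤ 1 := by nlinarith [abs_nonneg a]
  have haw : |a| * ‖w‖ ≤ 1 := by nlinarith [abs_nonneg a, norm_nonneg w]
  have hB : ‖exp (a * w)‖ ≤ Real.exp (|a| * (R / N)) := by
    rw [norm_exp]
    gcongr
    calc (a * w).re ≤ ‖(a : ℂ) * w‖ := re_le_norm _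
      _ = |a| * ‖w‖ := by rw [norm_mul, norm_real, Real.norm_eq_abs]
      _ ≤ |a| * (R / N) := by gcongr
  have hAB : ‖stepMGF a w - exp (a * w)‖ ≤ C * (R / N) ^ 2 :=
    (norm_stepMGF_sub_exp_le a hw₁ haw).trans (by gcongr)
  have hpow : exp (a * w) ^ N = exp (I * a * z) := by
    rw [← exp_nat_mul]
    congr 1
    simp only [w]
    field_simp
  have hexponent : N * (|a| * (R / N) + C * (R / N) ^ 2) ≤ |a| * R + C * R ^ 2 := by
    have hN₁ : (1 : ℝ) ≤ N := by exact_mod_cast Nat.one_le_iff_ne_zero.mpr hN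
    rw [show N * (|a| * (R / N) + C * (R / N) ^ 2) = |a| * R + C * R ^ 2 / N by field_simp]
    gcongr
    exact div_le_self (by positivity) hN₁
  calc _ = ‖stepMGF a w ^ N - exp (a * w) ^ N‖ := by rw [hpow]
    _ ≤ N * Real.exp (N * (|a| * (R / N) + C * (R / N) ^ 2)) * (C * (R / N) ^ 2) :=
      norm_pow_sub_pow_le_of_norm_le_exp (by positivity) hB hAB N
    _ ≤ N * Real.exp (|a| * R + C * R ^ 2) * (C * (R / N) ^ 2) := by gcongr
    _ = Real.exp (|a| * R + C * R ^ 2) * C * R ^ 2 / N := by field_simp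

lemma tendstoUniformlyOn_stepMGF_pow_closedBall (a R : ℝ) :
    TendstoUniformlyOn (fun (N : ℕ) (z : ℂ) => stepMGF a (I * z / N) ^ N)
      (fun z => exp (I * a * z)) atTop (closedBall 0 R) := by
  set D := Real.exp (|a| * R + (1 + |a| + a ^ 2) * R ^ 2) * (1 + |a| + a ^ 2) * R ^ 2
  rw [Metric.tendstoUniformlyOn_iff]
  intro ε hε
  filter_upwards [eventually_ne_atTop 0, eventually_ge_atTop ⌈(1 + |a|) * R⌉₊,
    (tendsto_const_div_atTop_nhds_zero_nat D).eventually (gt_mem_nhds hε)] with N hN hRN hD z hz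
  rw [dist_comm, dist_eq_norm]
  exact (norm_stepMGF_pow_sub_exp_le a hN (Nat.ceil_le.mp hRN)
    (mem_closedBall_zero_iff.mp hz)).trans_lt hD

/-- `F_N(a, ·)` of the statement, extended to `ℂ`. -/
noncomputable def binomialExpSum (a : ℝ) (N : ℕ) (z : ℂ) : ℂ :=
  ∑ j ∈ Finset.range (N + 1),
    (N.choose j : ℂ) * ((1 + (a : ℂ)) / 2) ^ (N - j) * ((1 - (a : ℂ)) / 2) ^ j *
      exp (I * (1 - 2 * (j : ℂ) / N) * z)

lemma binomialExpSum_eq_stepMGF_pow (a : ℝ) {N : ℕ} (hN : N ≠ 0) (z : ℂ) :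
    binomialExpSum a N z = stepMGF a (I * z / N) ^ N := by
  rw [binomialExpSum, stepMGF, add_pow]
  refine Finset.sum_congr rfl fun j hj => ?_
  have hjN : j ≤ N := Finset.mem_range_succ_iff.mp hj
  have harg : I * (1 - 2 * (j : ℂ) / N) * z =
      j * -(I * z / N) + ((N - j : ℕ) : ℂ) * (I * z / N) := by
    push_cast [Nat.cast_sub hjN]
    field_simp
    ring
  rw [mul_pow, mul_pow, ← exp_nat_mul, ← exp_nat_mul, harg, exp_add]
  ring

lemma differentiable_binomialExpSum (a : ℝ) (N : ℕ) : Differentiable ℂ (binomialExpSum a N) := by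
  unfold binomialExpSum
  fun_prop

lemma tendstoLocallyUniformly_binomialExpSum (a : ℝ) :
    TendstoLocallyUniformly (binomialExpSum a) (fun z => exp (I * a * z)) atTop := by
  refine tendstoLocallyUniformly_of_forall_exists_nhds fun z =>
    ⟨closedBall 0 (‖z‖ + 1), closedBall_mem_nhds_of_mem (by simp), ?_⟩
  refine (tendstoUniformlyOn_stepMGF_pow_closedBall a _).congr ?_
  filter_upwards [eventually_ne_atTop 0] with N hN w _
  exact (binomialExpSum_eq_stepMGF_pow a hN w).symm

section IteratedDeriv

variable {E : Type*} [NormedAddCommGroup E] [NormedSpace ℂ E] [CompleteSpace E]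

theorem Differentiable.iteratedDeriv {f : ℂ → E} (hf : Differentiable ℂ f) (k : ℕ) :
    Differentiable ℂ (_root_.iteratedDeriv k f) :=
  hf.contDiff.differentiable_iteratedDeriv k (WithTop.coe_lt_top _)

theorem TendstoLocallyUniformly.iteratedDeriv {ι : Type*} {F : ι → ℂ → E} {f : ℂ → E}
    {p : Filter ι} (hf : TendstoLocallyUniformly F f p) (hF : ∀ᶠ n in p, Differentiable ℂ (F n))
    (k : ℕ) :
    TendstoLocallyUniformly (fun n => _root_.iteratedDeriv k (F n)) (_root_.iteratedDeriv k f) p := by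
  induction k with
  | zero => simpa only [iteratedDeriv_zero] using hf
  | succ k ih =>
    have hFk : ∀ᶠ n in p, DifferentiableOn ℂ (_root_.iteratedDeriv k (F n)) univ := by
      filter_upwards [hF] with n hn
      exact (hn.iteratedDeriv k).differentiableOn
    simpa only [iteratedDeriv_succ, tendstoLocallyUniformlyOn_univ, Function.comp_def] using
      (tendstoLocallyUniformlyOn_univ.mpr ih).deriv hFk isOpen_univ

end IteratedDeriv

theorem iteratedDeriv_comp_ofReal {f : ℂ → ℂ} (hf : Differentiable ℂ f) (k : ℕ) :
    iteratedDeriv k (fun x : ℝ => f x) = fun x : ℝ => iteratedDeriv k f x := by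
  induction k with
  | zero => simp only [iteratedDeriv_zero]
  | succ k ih =>
    rw [iteratedDeriv_succ, iteratedDeriv_succ, ih]
    funext x
    exact ((hf.iteratedDeriv k).differentiableAt.hasDerivAt.comp_ofReal).deriv

theorem FN_derivatives_tendsto_uniformly_general (a : ℝ) (k : ℕ)
    (K : Set ℝ) (hK : IsCompact K) :
    TendstoUniformlyOn
      (fun (N : ℕ) (x : ℝ) =>
        iteratedDeriv k (fun y : ℝ =>
          ∑ j ∈ Finset.range (N + 1),
            (N.choose j : ℂ) * ((1 + (a : ℂ)) / 2) ^ (N - j) *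
              ((1 - (a : ℂ)) / 2) ^ j *
              Complex.exp (Complex.I * (1 - 2 * (j : ℂ) / N) * y)) x)
      (fun x : ℝ => (Complex.I * a) ^ k * Complex.exp (Complex.I * a * x))
      Filter.atTop K := by
  have hℂ : TendstoLocallyUniformly (fun N => iteratedDeriv k (binomialExpSum a N))
      (fun z => (I * a) ^ k * exp (I * a * z)) atTop := by
    simpa only [iteratedDeriv_cexp_const_mul] using
      (tendstoLocallyUniformly_binomialExpSum a).iteratedDeriv
        (.of_forall (differentiable_binomialExpSum a)) k
  have hℝ := tendstoLocallyUniformly_iff_forall_isCompact.mp (hℂ.comp _ continuous_ofReal) K hK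
  have hrestrict (N : ℕ) := iteratedDeriv_comp_ofReal (differentiable_binomialExpSum a N) k
  simp only [Function.comp_def, ← hrestrict] at hℝ
  exact hℝ

theorem FN_derivatives_tendsto_uniformly (a lam : ℝ) (k : ℕ)
    (K : Set ℝ) (hK : IsCompact K) :
    TendstoUniformlyOn
      (fun (N : ℕ) (x : ℝ) =>
        iteratedDeriv k (fun y : ℝ =>
          ∑ j ∈ Finset.range (N + 1),
            (N.choose j : ℂ) * ((1 + (a : ℂ)) / 2) ^ (N - j) *
              ((1 - (a : ℂ)) / 2) ^ j *
              Complex.exp (Complex.I * (1 - 2 * (j : ℂ) / N) * y)) x)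
      (fun x : ℝ => (Complex.I * a) ^ k * Complex.exp (Complex.I * a * x))
      Filter.atTop K :=
  FN_derivatives_tendsto_uniformly_general a k K hK
end
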